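/- arXiv:1810.01494 — 7 statements merged into one kernel-verified Lean document; each statement's English description precedes it below -/
import Mathlib

section
/- There exists a constant C > 0 such that for every L > 0 and every continuously differentiable, compactly supported function φ : ℝ² → ℝ satisfying ∫_ℝ φ(s,t) v_⋆'(t) dt = 0 for every s ∈ ℝ, one has ∫_0^L ∫_ℝ ( |∂_s φ(s,t)|² + |∂_t φ(s,t)|² − (1 − 3 v_⋆(t)²) φ(s,t)² ) dt ds ≥ C ∫_0^L ∫_ℝ ( |∂_s φ(s,t)|² + |∂_t φ(s,t)|² + φ(s,t)² ) dt ds. In particular the constant C does not depend on the width L of the stripe. -/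
/-!
Since `(√2 v⋆)' = 1 - v⋆²`, completing the square and integrating by parts on a vertical fiber
gives `∫ u'² - f'(v⋆) u² = ‖B u‖²` with `B u = u' + √2 v⋆ u`, whose kernel is spanned by
`v⋆' = (1 - v⋆²)/√2`. If `u ⊥ v⋆'`, the adjoint equation `B* w = -w' + √2 v⋆ w = u` is solved by
`w = -(∫_{-∞}^t u (1 - v⋆²)) / (1 - v⋆²)`, compactly supported because
`∫ u (1 - v⋆²) = √2 ⟨u, v⋆'⟩ = 0`, and `‖B* w‖² = ∫ w'² + (1 + v⋆²) w² ≥ ‖w‖²`. Hence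
`‖u‖² = ⟨w, B u⟩ ≤ ‖w‖ ‖B u‖ ≤ ‖u‖ ‖B u‖`, so the fiber form dominates `‖u‖²`; as it also
dominates `‖u'‖² - ‖u‖²`, it dominates `(‖u'‖² + ‖u‖²) / 3`. Adding `‖∂ₛφ‖² ≥ 0` and integrating
over `s ∈ (0, L)` gives `C = 1/3`, whatever `L` is.
-/

noncomputable section

open Real MeasureTheory

/-- The Allen–Cahn heteroclinic `v⋆(t) = tanh(t/√2)`. -/
def vStar (t : ℝ) : ℝ := Real.tanh (t / Real.sqrt 2)

/-- Partial derivative in the first (`s`) variable. -/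
def pds (φ : ℝ × ℝ → ℝ) (s t : ℝ) : ℝ := deriv (fun x => φ (x, t)) s

/-- Partial derivative in the second (`t`) variable. -/
def pdt (φ : ℝ × ℝ → ℝ) (s t : ℝ) : ℝ := deriv (fun y => φ (s, y)) t

open Set Filter Topology

namespace Real

theorem hasDerivAt_tanh (x : ℝ) : HasDerivAt tanh (1 - tanh x ^ 2) x := by
  have h := (hasDerivAt_sinh x).div (hasDerivAt_cosh x) (cosh_pos x).ne'
  rw [show sinh / cosh = tanh from funext fun y => (tanh_eq_sinh_div_cosh y).symm] at h
  refine h.congr_deriv ?_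
  rw [tanh_eq_sinh_div_cosh, div_pow]
  field_simp

theorem contDiff_tanh {n : WithTop ℕ∞} : ContDiff ℝ n tanh := by
  rw [show tanh = fun y => sinh y / cosh y from funext tanh_eq_sinh_div_cosh]
  exact contDiff_sinh.div contDiff_cosh fun x => (cosh_pos x).ne'

end Real

theorem sqrt_two_sq : √2 ^ 2 = (2 : ℝ) := Real.sq_sqrt zero_le_two

theorem hasDerivAt_vStar (t : ℝ) : HasDerivAt vStar ((1 - vStar t ^ 2) / √2) t := by
  unfold vStar
  simpa [Function.comp_def, div_eq_mul_inv] using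
    (Real.hasDerivAt_tanh (t / √2)).comp t ((hasDerivAt_id t).div_const √2)

theorem deriv_vStar (t : ℝ) : deriv vStar t = (1 - vStar t ^ 2) / √2 :=
  (hasDerivAt_vStar t).deriv

theorem contDiff_vStar {n : WithTop ℕ∞} : ContDiff ℝ n vStar :=
  Real.contDiff_tanh.comp (contDiff_id.div_const _)

@[fun_prop]
theorem continuous_vStar : Continuous vStar := contDiff_vStar.continuous (n := 0)

theorem one_sub_vStar_sq_pos (t : ℝ) : 0 < 1 - vStar t ^ 2 :=
  sub_pos.mpr (Real.tanh_sq_lt_one _)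

theorem hasDerivAt_sqrt_two_mul_vStar (t : ℝ) :
    HasDerivAt (fun t => √2 * vStar t) (1 - vStar t ^ 2) t :=
  ((hasDerivAt_vStar t).const_mul √2).congr_deriv (by field_simp)

theorem hasDerivAt_one_sub_vStar_sq (t : ℝ) :
    HasDerivAt (fun t => 1 - vStar t ^ 2) (-(√2 * vStar t * (1 - vStar t ^ 2))) t := by
  refine (((hasDerivAt_vStar t).pow 2).const_sub 1).congr_deriv ?_
  field_simp
  linear_combination (vStar t * (1 - vStar t ^ 2)) * sqrt_two_sq

section Primitives

variable {E : Type*} [NormedAddCommGroup E] [NormedSpace ℝ E]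

theorem integral_deriv_eq_zero_of_hasCompactSupport [CompleteSpace E] {f : ℝ → E}
    (hf : ContDiff ℝ 1 f) (hfs : HasCompactSupport f) : ∫ x, deriv f x = 0 := by
  have hd : Integrable (deriv f) :=
    (hf.continuous_deriv le_rfl).integrable_of_hasCompactSupport hfs.deriv
  rw [← intervalIntegral.integral_Iic_add_Ioi (b := 0) hd.integrableOn hd.integrableOn,
    hfs.integral_Iic_deriv_eq hf, hfs.integral_Ioi_deriv_eq hf, add_neg_cancel]

theorem integral_eq_of_eq_add_deriv [CompleteSpace E] {f g h : ℝ → E} (hg : Integrable g)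
    (hh : ContDiff ℝ 1 h) (hhs : HasCompactSupport h) (hfgh : ∀ x, f x = g x + deriv h x) :
    ∫ x, f x = ∫ x, g x := by
  have hd : Integrable (deriv h) :=
    (hh.continuous_deriv le_rfl).integrable_of_hasCompactSupport hhs.deriv
  simp only [hfgh, integral_add hg hd, integral_deriv_eq_zero_of_hasCompactSupport hh hhs,
    add_zero]

theorem hasDerivAt_integral_Iic [CompleteSpace E] {g : ℝ → E} (hg : Continuous g)
    (hgi : Integrable g) (t : ℝ) : HasDerivAt (fun t => ∫ x in Iic t, g x) (g t) t := by
  have h : (fun t => ∫ x in Iic t, g x) = fun t => (∫ x in Iic 0, g x) + ∫ x in 0..t, g x :=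
    funext fun t => by
      rw [← intervalIntegral.integral_Iic_sub_Iic hgi.integrableOn hgi.integrableOn,
        add_sub_cancel]
  rw [h]
  exact (hg.integral_hasStrictDerivAt 0 t).hasDerivAt.const_add _

theorem HasCompactSupport.integral_Iic {g : ℝ → E} (hg : HasCompactSupport g)
    (hg0 : ∫ x, g x = 0) : HasCompactSupport fun t => ∫ x in Iic t, g x := by
  obtain ⟨a, ha⟩ := hg.isCompact.bddBelow
  obtain ⟨b, hb⟩ := hg.isCompact.bddAbove
  refine .intro (isCompact_Icc (a := a) (b := b)) fun t ht => ?_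
  rcases not_and_or.mp ht with hat | htb
  · refine setIntegral_eq_zero_of_forall_eq_zero fun x hx => ?_
    exact image_eq_zero_of_notMem_tsupport fun hx' => hat ((ha hx').trans (mem_Iic.mp hx))
  · rw [setIntegral_eq_integral_of_forall_compl_eq_zero fun x hx => ?_, hg0]
    exact image_eq_zero_of_notMem_tsupport fun hx' =>
      hx (mem_Iic.mpr ((not_le.mp htb).le.trans' (hb hx')))

end Primitives

theorem HasCompactSupport.integrable_of_continuous_of_eq_zero {u h : ℝ → ℝ}
    (hu : HasCompactSupport u) (hh : Continuous h) (h0 : ∀ x ∉ tsupport u, h x = 0) :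
    Integrable h :=
  hh.integrable_of_hasCompactSupport (.intro hu h0)

/-- The factor `B` in `-∂ₜ² - f'(v⋆) = B* B`; `creationOp` is `B*`. -/
def annihilationOp (u : ℝ → ℝ) (t : ℝ) : ℝ := deriv u t + √2 * vStar t * u t

def creationOp (w : ℝ → ℝ) (t : ℝ) : ℝ := -deriv w t + √2 * vStar t * w t

section Fiber

variable {u w : ℝ → ℝ}

theorem continuous_annihilationOp (hu : ContDiff ℝ 1 u) : Continuous (annihilationOp u) := by
  have := hu.continuous_deriv le_rfl
  unfold annihilationOp
  fun_prop

theorem integral_annihilationOp_sq (hu : ContDiff ℝ 1 u) (hc : HasCompactSupport u) :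
    ∫ t, annihilationOp u t ^ 2 = ∫ t, (deriv u t ^ 2 - (1 - 3 * vStar t ^ 2) * u t ^ 2) := by
  have := hu.continuous_deriv le_rfl
  refine integral_eq_of_eq_add_deriv (h := fun t => √2 * vStar t * u t ^ 2)
    (hc.integrable_of_continuous_of_eq_zero (by fun_prop) fun x hx => by
      simp [image_eq_zero_of_notMem_tsupport hx, deriv_of_notMem_tsupport hx])
    ((contDiff_const.mul contDiff_vStar).mul (hu.pow 2))
    (.intro hc fun x hx => by simp [image_eq_zero_of_notMem_tsupport hx]) fun t => ?_
  have hd : HasDerivAt (fun t => √2 * vStar t * u t ^ 2) _ t :=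
    (hasDerivAt_sqrt_two_mul_vStar t).mul ((hu.differentiable one_ne_zero t).hasDerivAt.pow 2)
  rw [hd.deriv, annihilationOp]
  linear_combination (vStar t ^ 2 * u t ^ 2) * sqrt_two_sq

theorem integral_sq_le_integral_creationOp_sq (hw : ContDiff ℝ 1 w) (hc : HasCompactSupport w) :
    ∫ t, w t ^ 2 ≤ ∫ t, creationOp w t ^ 2 := by
  have := hw.continuous_deriv le_rfl
  calc ∫ t, w t ^ 2 ≤ ∫ t, (deriv w t ^ 2 + (1 + vStar t ^ 2) * w t ^ 2) :=
        integral_mono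
          (hc.integrable_of_continuous_of_eq_zero (by fun_prop) fun x hx => by
            simp [image_eq_zero_of_notMem_tsupport hx])
          (hc.integrable_of_continuous_of_eq_zero (by fun_prop) fun x hx => by
            simp [image_eq_zero_of_notMem_tsupport hx, deriv_of_notMem_tsupport hx])
          fun t => by nlinarith [sq_nonneg (deriv w t), sq_nonneg (vStar t * w t)]
    _ = ∫ t, creationOp w t ^ 2 := by
      refine integral_eq_of_eq_add_deriv (h := fun t => √2 * vStar t * w t ^ 2)
        (hc.integrable_of_continuous_of_eq_zero (by unfold creationOp; fun_prop) fun x hx => by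
          simp [creationOp, image_eq_zero_of_notMem_tsupport hx, deriv_of_notMem_tsupport hx])
        ((contDiff_const.mul contDiff_vStar).mul (hw.pow 2))
        (.intro hc fun x hx => by simp [image_eq_zero_of_notMem_tsupport hx]) fun t => ?_
      have hd : HasDerivAt (fun t => √2 * vStar t * w t ^ 2) _ t :=
        (hasDerivAt_sqrt_two_mul_vStar t).mul ((hw.differentiable one_ne_zero t).hasDerivAt.pow 2)
      rw [hd.deriv, creationOp]
      linear_combination (-(vStar t ^ 2 * w t ^ 2)) * sqrt_two_sq

theorem integral_mul_annihilationOp (hu : ContDiff ℝ 1 u) (hc : HasCompactSupport u)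
    (hw : ContDiff ℝ 1 w) :
    ∫ t, w t * annihilationOp u t = ∫ t, creationOp w t * u t := by
  have := hw.continuous_deriv le_rfl
  refine integral_eq_of_eq_add_deriv (h := fun t => w t * u t)
    (hc.integrable_of_continuous_of_eq_zero (by unfold creationOp; fun_prop) fun x hx => by
      simp [image_eq_zero_of_notMem_tsupport hx])
    (hw.mul hu) (.intro hc fun x hx => by simp [image_eq_zero_of_notMem_tsupport hx])
    fun t => ?_
  have hd : HasDerivAt (fun t => w t * u t) _ t :=
    (hw.differentiable one_ne_zero t).hasDerivAt.mul (hu.differentiable one_ne_zero t).hasDerivAt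
  rw [hd.deriv, annihilationOp, creationOp]
  ring

theorem exists_creationOp_eq (hu : Continuous u) (hc : HasCompactSupport u)
    (horth : ∫ t, u t * deriv vStar t = 0) :
    ∃ w, ContDiff ℝ 1 w ∧ HasCompactSupport w ∧ creationOp w = u := by
  set g : ℝ → ℝ := fun t => u t * (1 - vStar t ^ 2)
  have hg : Continuous g := by fun_prop
  have hgc : HasCompactSupport g := .intro hc fun x hx => by
    simp [g, image_eq_zero_of_notMem_tsupport hx]
  have hg0 : ∫ t, g t = 0 := by
    have hg_eq t : g t = √2 * (u t * deriv vStar t) := by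
      simp only [g, deriv_vStar]
      field_simp
    simp only [hg_eq, integral_const_mul, horth, mul_zero]
  set F : ℝ → ℝ := fun t => ∫ x in Iic t, g x
  have hF : ∀ t, HasDerivAt F (g t) t :=
    hasDerivAt_integral_Iic hg (hg.integrable_of_hasCompactSupport hgc)
  have hFc : HasCompactSupport F := hgc.integral_Iic hg0
  have hF1 : ContDiff ℝ 1 F := contDiff_one_iff_deriv.mpr
    ⟨fun t => (hF t).differentiableAt, funext (fun t => (hF t).deriv) ▸ hg⟩
  have hpos t := (one_sub_vStar_sq_pos t).ne'
  refine ⟨fun t => -F t / (1 - vStar t ^ 2),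
    hF1.neg.div (contDiff_const.sub (contDiff_vStar.pow 2)) hpos,
    .intro hFc fun x hx => by simp [image_eq_zero_of_notMem_tsupport hx],
    funext fun t => ?_⟩
  have hd : HasDerivAt (fun t => -F t / (1 - vStar t ^ 2)) _ t :=
    (hF t).neg.div (hasDerivAt_one_sub_vStar_sq t) (hpos t)
  rw [creationOp, hd.deriv]
  field_simp [hpos t]
  simp only [g, Pi.neg_apply]
  ring

theorem integral_sq_le_integral_annihilationOp_sq (hu : ContDiff ℝ 1 u)
    (hc : HasCompactSupport u) (horth : ∫ t, u t * deriv vStar t = 0) :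
    ∫ t, u t ^ 2 ≤ ∫ t, annihilationOp u t ^ 2 := by
  obtain ⟨w, hw, hwc, hwu⟩ := exists_creationOp_eq hu.continuous hc horth
  have := continuous_annihilationOp hu
  have hBu0 x (hx : x ∉ tsupport u) : annihilationOp u x = 0 := by
    simp [annihilationOp, image_eq_zero_of_notMem_tsupport hx, deriv_of_notMem_tsupport hx]
  have hw2 : Integrable fun t => w t ^ 2 :=
    hwc.integrable_of_continuous_of_eq_zero (by fun_prop) fun x hx => by
      simp [image_eq_zero_of_notMem_tsupport hx]
  have hBu2 : Integrable fun t => annihilationOp u t ^ 2 :=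
    hc.integrable_of_continuous_of_eq_zero (by fun_prop) fun x hx => by simp [hBu0 x hx]
  have hdual : ∫ t, u t ^ 2 = ∫ t, w t * annihilationOp u t := by
    rw [integral_mul_annihilationOp hu hc hw, hwu]
    simp only [sq]
  have hw_le : ∫ t, w t ^ 2 ≤ ∫ t, u t ^ 2 := hwu ▸ integral_sq_le_integral_creationOp_sq hw hwc
  have hAM : ∫ t, 2 * (w t * annihilationOp u t) ≤ ∫ t, (w t ^ 2 + annihilationOp u t ^ 2) :=
    integral_mono
      (hc.integrable_of_continuous_of_eq_zero (by fun_prop) fun x hx => by simp [hBu0 x hx])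
      (hw2.add hBu2) fun t => by linarith [two_mul_le_add_sq (w t) (annihilationOp u t)]
  rw [integral_const_mul, integral_add hw2 hBu2, ← hdual] at hAM
  linarith

theorem integral_deriv_sq_add_sq_le_three_mul (hu : ContDiff ℝ 1 u) (hc : HasCompactSupport u)
    (horth : ∫ t, u t * deriv vStar t = 0) :
    ∫ t, (deriv u t ^ 2 + u t ^ 2) ≤
      3 * ∫ t, (deriv u t ^ 2 - (1 - 3 * vStar t ^ 2) * u t ^ 2) := by
  have := hu.continuous_deriv le_rfl
  have hQ : Integrable fun t => deriv u t ^ 2 - (1 - 3 * vStar t ^ 2) * u t ^ 2 :=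
    hc.integrable_of_continuous_of_eq_zero (by fun_prop) fun x hx => by
      simp [image_eq_zero_of_notMem_tsupport hx, deriv_of_notMem_tsupport hx]
  have hu2 : Integrable fun t => u t ^ 2 :=
    hc.integrable_of_continuous_of_eq_zero (by fun_prop) fun x hx => by
      simp [image_eq_zero_of_notMem_tsupport hx]
  have hgap := integral_sq_le_integral_annihilationOp_sq hu hc horth
  rw [integral_annihilationOp_sq hu hc] at hgap
  calc ∫ t, (deriv u t ^ 2 + u t ^ 2)
      ≤ ∫ t, ((deriv u t ^ 2 - (1 - 3 * vStar t ^ 2) * u t ^ 2) + 2 * u t ^ 2) :=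
        integral_mono
          (hc.integrable_of_continuous_of_eq_zero (by fun_prop) fun x hx => by
            simp [image_eq_zero_of_notMem_tsupport hx, deriv_of_notMem_tsupport hx])
          (hQ.add (hu2.const_mul 2)) fun t => by nlinarith [sq_nonneg (vStar t * u t)]
    _ ≤ 3 * ∫ t, (deriv u t ^ 2 - (1 - 3 * vStar t ^ 2) * u t ^ 2) := by
        rw [integral_add hQ (hu2.const_mul 2), integral_const_mul]
        linarith

end Fiber

section Slices

variable {h : ℝ × ℝ → ℝ}

theorem HasCompactSupport.slice (hc : HasCompactSupport h) (s : ℝ) :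
    HasCompactSupport fun t => h (s, t) :=
  .intro (hc.image continuous_snd) fun t ht =>
    image_eq_zero_of_notMem_tsupport fun hst => ht ⟨(s, t), hst, rfl⟩

theorem HasCompactSupport.integrable_slice (hh : Continuous h) (hc : HasCompactSupport h) (s : ℝ) :
    Integrable fun t => h (s, t) :=
  (hh.comp (continuous_const.prodMk continuous_id)).integrable_of_hasCompactSupport (hc.slice s)

theorem HasCompactSupport.integrable_integral_slice (hh : Continuous h)
    (hc : HasCompactSupport h) : Integrable fun s => ∫ t, h (s, t) := by
  have hi := hh.integrable_of_hasCompactSupport hc (μ := volume)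
  rw [Measure.volume_eq_prod] at hi
  exact hi.integral_prod_left

end Slices

section Partials

variable {φ : ℝ × ℝ → ℝ} {p : ℝ × ℝ}

theorem pds_eq_fderiv (hφ : DifferentiableAt ℝ φ p) : pds φ p.1 p.2 = fderiv ℝ φ p (1, 0) :=
  (hφ.hasFDerivAt.comp_hasDerivAt p.1
    ((hasDerivAt_id p.1).prodMk (hasDerivAt_const p.1 p.2))).deriv

theorem pdt_eq_fderiv (hφ : DifferentiableAt ℝ φ p) : pdt φ p.1 p.2 = fderiv ℝ φ p (0, 1) :=
  (hφ.hasFDerivAt.comp_hasDerivAt p.2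
    ((hasDerivAt_const p.2 p.1).prodMk (hasDerivAt_id p.2))).deriv

@[fun_prop]
theorem continuous_pds (hφ : ContDiff ℝ 1 φ) : Continuous fun p : ℝ × ℝ => pds φ p.1 p.2 := by
  simp_rw [pds_eq_fderiv (hφ.differentiable one_ne_zero _)]
  exact (hφ.continuous_fderiv one_ne_zero).clm_apply continuous_const

@[fun_prop]
theorem continuous_pdt (hφ : ContDiff ℝ 1 φ) : Continuous fun p : ℝ × ℝ => pdt φ p.1 p.2 := by
  simp_rw [pdt_eq_fderiv (hφ.differentiable one_ne_zero _)]
  exact (hφ.continuous_fderiv one_ne_zero).clm_apply continuous_const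

theorem pds_eq_zero_of_notMem_tsupport (hp : p ∉ tsupport φ) : pds φ p.1 p.2 = 0 := by
  have h : (fun x => φ (x, p.2)) =ᶠ[𝓝 p.1] fun _ => 0 :=
    (notMem_tsupport_iff_eventuallyEq.mp hp).comp_tendsto
      ((continuous_id.prodMk continuous_const).tendsto' p.1 p rfl)
  rw [pds, h.deriv_eq, deriv_const]

theorem pdt_eq_zero_of_notMem_tsupport (hp : p ∉ tsupport φ) : pdt φ p.1 p.2 = 0 := by
  have h : (fun y => φ (p.1, y)) =ᶠ[𝓝 p.2] fun _ => 0 :=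
    (notMem_tsupport_iff_eventuallyEq.mp hp).comp_tendsto
      ((continuous_const.prodMk continuous_id).tendsto' p.2 p rfl)
  rw [pdt, h.deriv_eq, deriv_const]

end Partials

theorem integral_slice_coercive {φ : ℝ × ℝ → ℝ} (hφ : ContDiff ℝ 1 φ)
    (hφs : HasCompactSupport φ) {s : ℝ}
    (horth : ∫ t, φ (s, t) * deriv vStar t = 0) :
    1 / 3 * ∫ t, (pds φ s t ^ 2 + pdt φ s t ^ 2 + φ (s, t) ^ 2) ≤
      ∫ t, (pds φ s t ^ 2 + pdt φ s t ^ 2 - (1 - 3 * vStar t ^ 2) * φ (s, t) ^ 2) := by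
  have hslice {h : ℝ × ℝ → ℝ} (hh : Continuous h) (h0 : ∀ p ∉ tsupport φ, h p = 0) :
      Integrable fun t => h (s, t) :=
    HasCompactSupport.integrable_slice hh (.intro hφs h0) s
  have ha : Integrable fun t => pds φ s t ^ 2 :=
    hslice (h := fun p => pds φ p.1 p.2 ^ 2) (by fun_prop) fun p hp => by
      simp [pds_eq_zero_of_notMem_tsupport hp]
  have hX : Integrable fun t => pdt φ s t ^ 2 + φ (s, t) ^ 2 :=
    hslice (h := fun p => pdt φ p.1 p.2 ^ 2 + φ p ^ 2) (by fun_prop) fun p hp => by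
      simp [pdt_eq_zero_of_notMem_tsupport hp, image_eq_zero_of_notMem_tsupport hp]
  have hY : Integrable fun t => pdt φ s t ^ 2 - (1 - 3 * vStar t ^ 2) * φ (s, t) ^ 2 :=
    hslice (h := fun p => pdt φ p.1 p.2 ^ 2 - (1 - 3 * vStar p.2 ^ 2) * φ p ^ 2) (by fun_prop)
      fun p hp => by simp [pdt_eq_zero_of_notMem_tsupport hp, image_eq_zero_of_notMem_tsupport hp]
  have h1d : ∫ t, (pdt φ s t ^ 2 + φ (s, t) ^ 2) ≤
      3 * ∫ t, (pdt φ s t ^ 2 - (1 - 3 * vStar t ^ 2) * φ (s, t) ^ 2) :=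
    integral_deriv_sq_add_sq_le_three_mul (hφ.comp (contDiff_const.prodMk contDiff_id)) (hφs.slice s) horth
  have hpds : 0 ≤ ∫ t, pds φ s t ^ 2 := integral_nonneg fun t => sq_nonneg _
  simp only [add_assoc, add_sub_assoc]
  rw [integral_add ha hX, integral_add ha hY]
  linarith

theorem stmt3 :
    ∃ C : ℝ, 0 < C ∧
      ∀ L : ℝ, 0 < L →
        ∀ φ : ℝ × ℝ → ℝ, ContDiff ℝ 1 φ → HasCompactSupport φ →
          (∀ s : ℝ, (∫ t : ℝ, φ (s, t) * deriv vStar t) = 0) →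
          C * (∫ s in Set.Ioo (0 : ℝ) L, ∫ t : ℝ,
              ((pds φ s t) ^ 2 + (pdt φ s t) ^ 2 + (φ (s, t)) ^ 2)) ≤
            ∫ s in Set.Ioo (0 : ℝ) L, ∫ t : ℝ,
              ((pds φ s t) ^ 2 + (pdt φ s t) ^ 2 - (1 - 3 * (vStar t) ^ 2) * (φ (s, t)) ^ 2) := by
  refine ⟨1 / 3, by norm_num, fun L _ φ hφ hφs horth => ?_⟩
  have hE := HasCompactSupport.integrable_integral_slice
    (h := fun p => pds φ p.1 p.2 ^ 2 + pdt φ p.1 p.2 ^ 2 + φ p ^ 2) (by fun_prop)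
    (.intro hφs fun p hp => by simp [pds_eq_zero_of_notMem_tsupport hp,
      pdt_eq_zero_of_notMem_tsupport hp, image_eq_zero_of_notMem_tsupport hp])
  have hQ := HasCompactSupport.integrable_integral_slice
    (h := fun p => pds φ p.1 p.2 ^ 2 + pdt φ p.1 p.2 ^ 2 - (1 - 3 * vStar p.2 ^ 2) * φ p ^ 2)
    (by fun_prop) (.intro hφs fun p hp => by simp [pds_eq_zero_of_notMem_tsupport hp,
      pdt_eq_zero_of_notMem_tsupport hp, image_eq_zero_of_notMem_tsupport hp])
  rw [← integral_const_mul]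
  exact setIntegral_mono (hE.const_mul _).integrableOn hQ.integrableOn
    fun s => integral_slice_coercive hφ hφs (horth s)
end
end

section
/- Let S > 0 and let q : ℝ → ℝ be continuous. Suppose Φ⁺, Φ⁻ : ℝ → ℝ are twice continuously differentiable, linearly independent solutions of Φ'' + q Φ = 0 on ℝ such that (Φ⁺)'(0) = (Φ⁺)'(S) ≠ 0 and (Φ⁻)'(0) ≠ (Φ⁻)'(S). Then every twice continuously differentiable function h : ℝ → ℝ satisfying h'' + q h = 0 on ℝ, h(s + S) = h(s) for all s ∈ ℝ, and h(S − s) = h(s) for all s ∈ ℝ, is identically zero. -/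
/-!
Periodicity and the reflection symmetry force `h'(0) = h'(S) = 0`, and `h(S) = h(0)`. The
Wronskian `h Φ⁻' - h' Φ⁻` of two solutions of `y'' + q y = 0` is constant, so comparing it at
`0` and `S` gives `h(0) (Φ⁻'(S) - Φ⁻'(0)) = 0`, whence `h(0) = 0`. Then `h` solves the equation
with zero Cauchy data at `0` and vanishes by uniqueness for linear ODEs.
-/

open Set

section Symmetry

variable {𝕜 F : Type*} [NontriviallyNormedField 𝕜] [NormedAddCommGroup F] [NormedSpace 𝕜 F]

theorem Function.Periodic.deriv {f : 𝕜 → F} {c : 𝕜} (hf : Function.Periodic f c) :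
    Function.Periodic (deriv f) c := fun x => by
  rw [← deriv_comp_add_const, show (fun y => f (y + c)) = f from funext hf]

theorem deriv_eq_neg_deriv_of_comp_const_sub {f : 𝕜 → F} {a : 𝕜} (hf : ∀ x, f (a - x) = f x)
    (x : 𝕜) : deriv f x = -deriv f (a - x) := by
  rw [← deriv_comp_const_sub, show (fun y => f (a - y)) = f from funext hf]

end Symmetry

theorem deriv_zero_eq_zero_of_periodic_of_comp_const_sub {f : ℝ → ℝ} {S : ℝ}
    (hper : Function.Periodic f S) (hsymm : ∀ x, f (S - x) = f x) : deriv f 0 = 0 := by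
  have hshift : deriv f S = deriv f 0 := by simpa using hper.deriv 0
  have hreflect := deriv_eq_neg_deriv_of_comp_const_sub hsymm 0
  rw [sub_zero, hshift] at hreflect
  linarith

theorem lipschitzWith_snd_neg_mul_fst {c C : ℝ} (hc : ‖c‖ ≤ C) :
    LipschitzWith (max 1 C.toNNReal) fun x : ℝ × ℝ => (x.2, -c * x.1) := by
  have hmul : LipschitzWith ‖-c‖₊ fun x : ℝ × ℝ => -c * x.1 :=
    (lipschitzWith_smul (-c)).comp LipschitzWith.prod_fst |>.weaken (by simp)
  refine (LipschitzWith.prod_snd.prodMk hmul).weaken (max_le_max le_rfl ?_)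
  rw [nnnorm_neg, ← Real.toNNReal_coe (r := ‖c‖₊), coe_nnnorm]
  exact Real.toNNReal_le_toNNReal hc

section SecondOrderLinear

variable {q u v : ℝ → ℝ}

noncomputable def wronskian (u v : ℝ → ℝ) (s : ℝ) : ℝ := u s * deriv v s - deriv u s * v s

theorem hasDerivAt_wronskian (hu : ContDiff ℝ 2 u) (hv : ContDiff ℝ 2 v)
    (huODE : ∀ s, deriv (deriv u) s + q s * u s = 0)
    (hvODE : ∀ s, deriv (deriv v) s + q s * v s = 0) (s : ℝ) :
    HasDerivAt (wronskian u v) 0 s := by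
  have hd := ((hu.differentiable two_ne_zero s).hasDerivAt.mul
    (hv.differentiable_deriv_two s).hasDerivAt).sub
    ((hu.differentiable_deriv_two s).hasDerivAt.mul (hv.differentiable two_ne_zero s).hasDerivAt)
  exact hd.congr_deriv (by linear_combination u s * hvODE s - v s * huODE s)

theorem wronskian_eq (hu : ContDiff ℝ 2 u) (hv : ContDiff ℝ 2 v)
    (huODE : ∀ s, deriv (deriv u) s + q s * u s = 0)
    (hvODE : ∀ s, deriv (deriv v) s + q s * v s = 0) (s t : ℝ) :
    wronskian u v s = wronskian u v t :=
  is_const_of_deriv_eq_zero (fun s => (hasDerivAt_wronskian hu hv huODE hvODE s).differentiableAt)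
    (fun s => (hasDerivAt_wronskian hu hv huODE hvODE s).deriv) s t

theorem hasDerivAt_prodMk_deriv (hu : ContDiff ℝ 2 u)
    (huODE : ∀ s, deriv (deriv u) s + q s * u s = 0) (t : ℝ) :
    HasDerivAt (fun s => (u s, deriv u s)) (deriv u t, -q t * u t) t := by
  rw [show -q t * u t = deriv (deriv u) t by linarith [huODE t]]
  exact (hu.differentiable two_ne_zero t).hasDerivAt.prodMk
    (hu.differentiable_deriv_two t).hasDerivAt

theorem eq_zero_of_ode_of_eq_zero_of_deriv_eq_zero (hq : Continuous q) (hu : ContDiff ℝ 2 u)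
    (huODE : ∀ s, deriv (deriv u) s + q s * u s = 0) {t₀ : ℝ} (h₀ : u t₀ = 0)
    (h₁ : deriv u t₀ = 0) (s : ℝ) : u s = 0 := by
  set a := min s t₀ - 1
  set b := max s t₀ + 1
  obtain ⟨C, hC⟩ := isCompact_Icc.exists_bound_of_continuousOn (hq.continuousOn (s := Icc a b))
  have hphase : EqOn (fun t => (u t, deriv u t)) 0 (Icc a b) :=
    ODE_solution_unique_of_mem_Icc (v := fun t x => (x.2, -q t * x.1)) (s := fun _ => univ)
      (fun t ht => (lipschitzWith_snd_neg_mul_fst (hC t (Ioo_subset_Icc_self ht))).lipschitzOnWith)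
      (t₀ := t₀) ⟨by grind, by grind⟩
      (hu.continuous.prodMk (hu.continuous_deriv one_le_two)).continuousOn
      (fun t _ => hasDerivAt_prodMk_deriv hu huODE t) (fun _ _ => trivial)
      continuousOn_const (fun t _ => (hasDerivAt_const t 0).congr_deriv (by ext <;> simp))
      (fun _ _ => trivial) (by simp [h₀, h₁])
  exact congrArg Prod.fst (hphase ⟨by grind, by grind⟩)

end SecondOrderLinear

theorem stmt4_general (S : ℝ) (q Φm : ℝ → ℝ) (hq : Continuous q)
    (hΦm : ContDiff ℝ 2 Φm)
    (hΦmODE : ∀ s : ℝ, deriv (deriv Φm) s + q s * Φm s = 0)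
    (hm : deriv Φm 0 ≠ deriv Φm S)
    (h : ℝ → ℝ) (hh : ContDiff ℝ 2 h)
    (hODE : ∀ s : ℝ, deriv (deriv h) s + q s * h s = 0)
    (hper : ∀ s : ℝ, h (s + S) = h s) (heven : ∀ s : ℝ, h (S - s) = h s) :
    ∀ s : ℝ, h s = 0 := by
  have hd0 : deriv h 0 = 0 := deriv_zero_eq_zero_of_periodic_of_comp_const_sub hper heven
  have hdS : deriv h S = 0 := by simpa [hd0] using Function.Periodic.deriv hper 0
  have hS : h S = h 0 := by simpa using hper 0
  have hW := wronskian_eq hh hΦm hODE hΦmODE S 0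
  simp only [wronskian, hd0, hdS, hS, zero_mul, sub_zero] at hW
  have h0 : h 0 = 0 := by
    by_contra hne
    exact hm (mul_left_cancel₀ hne hW).symm
  exact eq_zero_of_ode_of_eq_zero_of_deriv_eq_zero hq hh hODE h0 hd0

theorem stmt4 (S : ℝ) (hS : 0 < S) (q Φp Φm : ℝ → ℝ) (hq : Continuous q)
    (hΦp : ContDiff ℝ 2 Φp) (hΦm : ContDiff ℝ 2 Φm)
    (hΦpODE : ∀ s : ℝ, deriv (deriv Φp) s + q s * Φp s = 0)
    (hΦmODE : ∀ s : ℝ, deriv (deriv Φm) s + q s * Φm s = 0)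
    (hli : LinearIndependent ℝ ![Φp, Φm])
    (hp1 : deriv Φp 0 = deriv Φp S) (hp2 : deriv Φp 0 ≠ 0)
    (hm : deriv Φm 0 ≠ deriv Φm S)
    (h : ℝ → ℝ) (hh : ContDiff ℝ 2 h)
    (hODE : ∀ s : ℝ, deriv (deriv h) s + q s * h s = 0)
    (hper : ∀ s : ℝ, h (s + S) = h s) (heven : ∀ s : ℝ, h (S - s) = h s) :
    ∀ s : ℝ, h s = 0 :=
  stmt4_general S q Φm hq hΦm hΦmODE hm h hh hODE hper heven
end

section
/- Let γ ∈ (0, √2) and let a : ℝ → ℝ be continuous with 0 < a₀ ≤ a(s) ≤ A for all s, for some constants a₀, A. Then there exists a constant C > 0, depending only on γ, with the following property: if φ : ℝ² → ℝ is a bounded C² function, g : ℝ² → ℝ is continuous with G := sup_{(s,t)} |g(s,t)| cosh^γ(t) < ∞, and a(s) ∂_s²φ + ∂_t²φ + (1 − 3 v_⋆(t)²) φ = g holds on ℝ², then |φ(s,t)| ≤ C ( sup_{ℝ²} |φ| + G ) cosh^{−γ}(t) for all (s,t) ∈ ℝ². -/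
noncomputable section

open Real

/-- Second partial derivative in the first (`s`) variable. -/
def pdss (φ : ℝ × ℝ → ℝ) (s t : ℝ) : ℝ := deriv (fun x => deriv (fun y => φ (y, t)) x) s

/-- Second partial derivative in the second (`t`) variable. -/
def pdtt (φ : ℝ × ℝ → ℝ) (s t : ℝ) : ℝ := deriv (fun x => deriv (fun y => φ (s, y)) x) t

/-!
Far from the interface `f'(v⋆(t)) ≤ -(δ + γ²)` with `δ > 0`, while the barrier
`w(t) = cosh^{-γ} t` satisfies `w'' ≤ γ² w`. Hence `M w ∓ φ` is a supersolution of
`L = a ∂ₛ² + ∂ₜ² + f'(v⋆)` on the half-plane `t > T` as soon as `|g| ≤ δ M w`, and it is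
nonnegative on the line `t = T` once `M w(T) ≥ sup |φ|`. The maximum principle on the half-plane,
made to work on the unbounded domain by adding `ε cosh(βs) cosh(βt)` with `β` small, gives
`|φ| ≤ M w` there; `t < -T` follows by reflection, and on the strip `|t| ≤ T` the bound is trivial.
-/

open Filter Topology Set

theorem IsLocalMin.deriv_deriv_nonneg {f : ℝ → ℝ} {x : ℝ} (h : IsLocalMin f x)
    (hc : ContinuousAt f x) : 0 ≤ deriv (deriv f) x := by
  by_contra! hneg
  -- otherwise the second-derivative test makes `x` a local maximum too, so `f` is locally constant
  have hconst : f =ᶠ[𝓝 x] fun _ => f x := by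
    filter_upwards [h, isLocalMax_of_deriv_deriv_neg hneg h.deriv_eq_zero hc] with y hy₁ hy₂
    exact le_antisymm hy₂ hy₁
  rw [hconst.deriv.deriv_eq] at hneg
  simp at hneg

theorem abs_le_cosh (x : ℝ) : |x| ≤ cosh x := by
  rw [← cosh_abs]
  exact (self_le_sinh_iff.mpr (abs_nonneg x)).trans (sinh_lt_cosh _).le

theorem deriv_deriv_cosh_rpow (p t : ℝ) :
    deriv (deriv fun t => cosh t ^ p) t
      = p ^ 2 * cosh t ^ p - p * (p - 1) * cosh t ^ (p - 2) := by
  have hd : ∀ q x, HasDerivAt (fun t => cosh t ^ q) (q * cosh x ^ (q - 1) * sinh x) x :=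
    fun q x => ((hasDerivAt_cosh x).rpow_const (Or.inl (cosh_pos x).ne')).congr_deriv (by ring)
  have hd' : HasDerivAt (fun x => p * cosh x ^ (p - 1) * sinh x)
      (p * ((p - 1) * cosh t ^ (p - 1 - 1) * sinh t) * sinh t + p * cosh t ^ (p - 1) * cosh t) t :=
    ((hd (p - 1) t).const_mul p).mul (hasDerivAt_sinh t)
  rw [funext fun x => (hd p x).deriv, hd'.deriv]
  have hc := cosh_pos t
  have e1 : cosh t ^ (p - 1) = cosh t ^ (p - 2) * cosh t := by
    rw [← rpow_add_one hc.ne']; ring_nf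
  have e2 : cosh t ^ p = cosh t ^ (p - 2) * cosh t ^ 2 := by
    rw [← rpow_two, ← rpow_add hc]; ring_nf
  rw [e1, e2, show p - 1 - 1 = p - 2 by ring]
  linear_combination (-(p * (p - 1)) * cosh t ^ (p - 2)) * cosh_sq t

theorem pdss_eq_iteratedDeriv (φ : ℝ × ℝ → ℝ) (s t : ℝ) :
    pdss φ s t = iteratedDeriv 2 (fun y => φ (y, t)) s := by
  rw [iteratedDeriv_succ, iteratedDeriv_one]; rfl

theorem pdtt_eq_iteratedDeriv (φ : ℝ × ℝ → ℝ) (s t : ℝ) :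
    pdtt φ s t = iteratedDeriv 2 (fun y => φ (s, y)) t := by
  rw [iteratedDeriv_succ, iteratedDeriv_one]; rfl

theorem IsLocalMin.pdss_nonneg {ψ : ℝ × ℝ → ℝ} {s t : ℝ} (h : IsLocalMin ψ (s, t))
    (hψ : Continuous ψ) : 0 ≤ pdss ψ s t :=
  have hslice := Continuous.prodMk_left (X := ℝ) t
  (h.comp_continuous (b := s) hslice.continuousAt).deriv_deriv_nonneg (hψ.comp hslice).continuousAt

theorem IsLocalMin.pdtt_nonneg {ψ : ℝ × ℝ → ℝ} {s t : ℝ} (h : IsLocalMin ψ (s, t))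
    (hψ : Continuous ψ) : 0 ≤ pdtt ψ s t :=
  have hslice := Continuous.prodMk_right (Y := ℝ) s
  (h.comp_continuous (b := t) hslice.continuousAt).deriv_deriv_nonneg (hψ.comp hslice).continuousAt

/-- The linearized Allen–Cahn operator is the case `c = f' ∘ v⋆`. -/
def ellipticOp (a c : ℝ → ℝ) (ψ : ℝ × ℝ → ℝ) (s t : ℝ) : ℝ :=
  a s * pdss ψ s t + pdtt ψ s t + c t * ψ (s, t)

section ellipticOp

variable {a c : ℝ → ℝ} {ψ χ : ℝ × ℝ → ℝ}

theorem ellipticOp_add (hψ : ContDiff ℝ 2 ψ) (hχ : ContDiff ℝ 2 χ) (s t : ℝ) :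
    ellipticOp a c (fun p => ψ p + χ p) s t = ellipticOp a c ψ s t + ellipticOp a c χ s t := by
  have hs : ∀ {φ : ℝ × ℝ → ℝ}, ContDiff ℝ 2 φ → ContDiffAt ℝ 2 (fun y => φ (y, t)) s :=
    fun hφ => (hφ.comp (contDiff_id.prodMk contDiff_const)).contDiffAt
  have ht : ∀ {φ : ℝ × ℝ → ℝ}, ContDiff ℝ 2 φ → ContDiffAt ℝ 2 (fun y => φ (s, y)) t :=
    fun hφ => (hφ.comp (contDiff_const.prodMk contDiff_id)).contDiffAt
  simp only [ellipticOp, pdss_eq_iteratedDeriv, pdtt_eq_iteratedDeriv,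
    iteratedDeriv_fun_add (hs hψ) (hs hχ), iteratedDeriv_fun_add (ht hψ) (ht hχ)]
  ring

theorem ellipticOp_neg (s t : ℝ) : ellipticOp a c (fun p => -ψ p) s t = -ellipticOp a c ψ s t := by
  simp only [ellipticOp, pdss_eq_iteratedDeriv, pdtt_eq_iteratedDeriv, iteratedDeriv_fun_neg]
  ring

theorem ellipticOp_sub (hψ : ContDiff ℝ 2 ψ) (hχ : ContDiff ℝ 2 χ) (s t : ℝ) :
    ellipticOp a c (fun p => ψ p - χ p) s t = ellipticOp a c ψ s t - ellipticOp a c χ s t := by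
  simp_rw [sub_eq_add_neg]
  rw [ellipticOp_add hψ hχ.neg, ellipticOp_neg]

theorem ellipticOp_const_mul (k s t : ℝ) :
    ellipticOp a c (fun p => k * ψ p) s t = k * ellipticOp a c ψ s t := by
  simp only [ellipticOp, pdss_eq_iteratedDeriv, pdtt_eq_iteratedDeriv,
    iteratedDeriv_const_mul_field]
  ring

theorem ellipticOp_comp_snd (h : ℝ → ℝ) (s t : ℝ) :
    ellipticOp a c (fun p => h p.2) s t = deriv (deriv h) t + c t * h t := by
  simp [ellipticOp, pdss, pdtt]

theorem ellipticOp_cosh_mul_cosh (β s t : ℝ) :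
    ellipticOp a c (fun p => cosh (β * p.1) * cosh (β * p.2)) s t
      = (a s * β ^ 2 + β ^ 2 + c t) * (cosh (β * s) * cosh (β * t)) := by
  have h : iteratedDeriv 2 (fun y => cosh (β * y)) = fun y => β ^ 2 * cosh (β * y) := by
    rw [iteratedDeriv_comp_const_mul contDiff_cosh]
    simp
  simp only [ellipticOp, pdss_eq_iteratedDeriv, pdtt_eq_iteratedDeriv,
    iteratedDeriv_mul_const_field, iteratedDeriv_const_mul_field, h]
  ring

theorem ellipticOp_comp_neg_snd (s t : ℝ) :
    ellipticOp a c (fun p => ψ (p.1, -p.2)) s t = ellipticOp a (fun t => c (-t)) ψ s (-t) := by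
  simp only [ellipticOp, pdtt_eq_iteratedDeriv,
    iteratedDeriv_comp_neg 2 (fun y => ψ (s, y)) t, even_two.neg_one_pow, one_smul, neg_neg]
  rfl

end ellipticOp

theorem tendsto_cosh_mul_cosh_cocompact {β : ℝ} (hβ : 0 < β) :
    Tendsto (fun p : ℝ × ℝ => cosh (β * p.1) * cosh (β * p.2)) (cocompact (ℝ × ℝ)) atTop := by
  refine tendsto_atTop_mono (fun p => ?_) (tendsto_norm_cocompact_atTop.const_mul_atTop hβ)
  have h₁ := abs_le_cosh (β * p.1)
  have h₂ := abs_le_cosh (β * p.2)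
  have k₁ := one_le_cosh (β * p.1)
  have k₂ := one_le_cosh (β * p.2)
  rw [abs_mul, abs_of_pos hβ] at h₁ h₂
  rw [Prod.norm_def, Real.norm_eq_abs, Real.norm_eq_abs, mul_max_of_nonneg _ _ hβ.le]
  exact max_le (by nlinarith) (by nlinarith)

section MaximumPrinciple

variable {a c : ℝ → ℝ} {T : ℝ} {ψ : ℝ × ℝ → ℝ}

theorem nonneg_of_ellipticOp_neg_of_tendsto (ha : ∀ s, 0 ≤ a s) (hc : ∀ t, T < t → c t ≤ 0)
    (hψ : ContDiff ℝ 2 ψ) (hcoer : Tendsto ψ (cocompact (ℝ × ℝ)) atTop)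
    (hT : ∀ s, 0 ≤ ψ (s, T)) (hL : ∀ s t, T < t → ellipticOp a c ψ s t < 0)
    {s t : ℝ} (ht : T ≤ t) : 0 ≤ ψ (s, t) := by
  by_contra! hneg
  obtain ⟨⟨s₀, t₀⟩, hT₀, hmin⟩ := hψ.continuous.continuousOn.exists_isMinOn'
    (isClosed_le continuous_const continuous_snd) (x₀ := (s, t)) ht
    ((hcoer.eventually (eventually_ge_atTop _)).filter_mono inf_le_left)
  have hψ₀ : ψ (s₀, t₀) < 0 := (hmin ht).trans_lt hneg
  have hT₀ : T < t₀ := lt_of_le_of_ne hT₀ fun h => (hT s₀).not_gt (h ▸ hψ₀)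
  have hloc : IsLocalMin ψ (s₀, t₀) :=
    hmin.isLocalMin (mem_nhds_iff.mpr ⟨_, fun _ hp => le_of_lt hp,
      isOpen_lt continuous_const continuous_snd, hT₀⟩)
  have hss := hloc.pdss_nonneg hψ.continuous
  have htt := hloc.pdtt_nonneg hψ.continuous
  have hL₀ := hL s₀ t₀ hT₀
  rw [ellipticOp] at hL₀
  nlinarith [mul_nonneg (ha s₀) hss, mul_nonneg_of_nonpos_of_nonpos (hc t₀ hT₀) hψ₀.le]

theorem nonneg_of_ellipticOp_nonpos {A κ : ℝ} (ha : ∀ s, 0 ≤ a s ∧ a s ≤ A) (hκ : 0 < κ)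
    (hc : ∀ t, T < t → c t ≤ -κ) (hψ : ContDiff ℝ 2 ψ) (hψb : BddBelow (range ψ))
    (hT : ∀ s, 0 ≤ ψ (s, T)) (hL : ∀ s t, T < t → ellipticOp a c ψ s t ≤ 0)
    {s t : ℝ} (ht : T ≤ t) : 0 ≤ ψ (s, t) := by
  obtain ⟨B, hB⟩ := hψb
  have hA : 0 ≤ A := (ha 0).1.trans (ha 0).2
  set β := √(κ / (2 * (A + 1)))
  have hβ : 0 < β := sqrt_pos.mpr (by positivity)
  have hβA : (A + 1) * β ^ 2 < κ := by
    rw [sq_sqrt (by positivity)]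
    field_simp
    linarith
  set ρ := fun p : ℝ × ℝ => cosh (β * p.1) * cosh (β * p.2)
  have hρ : ∀ p, 0 < ρ p := fun p => mul_pos (cosh_pos _) (cosh_pos _)
  have hρC : ContDiff ℝ 2 ρ := by fun_prop
  -- `ψ + ε ρ` is coercive and a strict supersolution, since `L ρ < 0` for small `β`.
  have hperturbed : ∀ ε > 0, 0 ≤ ψ (s, t) + ε * ρ (s, t) := by
    intro ε hε
    refine nonneg_of_ellipticOp_neg_of_tendsto (c := c) (fun s => (ha s).1) (fun t ht => ?_)
      (hψ.add (contDiff_const.mul hρC))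
      (tendsto_atTop_add_left_of_le _ B (fun p => hB ⟨p, rfl⟩)
        ((tendsto_cosh_mul_cosh_cocompact hβ).const_mul_atTop hε))
      (fun s => add_nonneg (hT s) (mul_pos hε (hρ _)).le) (fun s t ht => ?_) ht
    · linarith [hc t ht]
    · rw [ellipticOp_add hψ (contDiff_const.mul hρC), ellipticOp_const_mul,
        ellipticOp_cosh_mul_cosh]
      have hLρ : a s * β ^ 2 + β ^ 2 + c t < 0 := by nlinarith [ha s, hc t ht]
      nlinarith [hL s t ht, mul_pos hε (mul_pos (neg_pos.mpr hLρ) (hρ (s, t)))]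
  refine le_of_forall_pos_le_add fun ε hε => ?_
  simpa [div_mul_cancel₀ _ (hρ (s, t)).ne'] using hperturbed _ (div_pos hε (hρ (s, t)))

end MaximumPrinciple

section Barrier

variable {a c : ℝ → ℝ} {A γ δ T M : ℝ} {φ : ℝ × ℝ → ℝ}

theorem le_mul_cosh_rpow_of_ellipticOp_ge (ha : ∀ s, 0 ≤ a s ∧ a s ≤ A) (hγ : 0 ≤ γ)
    (hδ : 0 < δ) (hc : ∀ t, T < t → c t ≤ -(δ + γ ^ 2)) (hM : 0 ≤ M)
    (hφ : ContDiff ℝ 2 φ) (hφb : BddAbove (range φ)) (hT : ∀ s, φ (s, T) ≤ M * cosh T ^ (-γ))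
    (hL : ∀ s t, T < t → -(δ * M * cosh t ^ (-γ)) ≤ ellipticOp a c φ s t)
    {s t : ℝ} (ht : T ≤ t) : φ (s, t) ≤ M * cosh t ^ (-γ) := by
  have hw : ContDiff ℝ 2 fun p : ℝ × ℝ => M * cosh p.2 ^ (-γ) :=
    contDiff_const.mul ((contDiff_cosh.comp contDiff_snd).rpow_const_of_ne
      fun p => (cosh_pos _).ne')
  obtain ⟨B, hB⟩ := hφb
  suffices 0 ≤ M * cosh t ^ (-γ) - φ (s, t) by linarith
  refine nonneg_of_ellipticOp_nonpos (c := c) (ψ := fun p => M * cosh p.2 ^ (-γ) - φ p) ha hδ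
    (fun t ht => by nlinarith [hc t ht]) (hw.sub hφ) ⟨-B, ?_⟩ (fun s => by linarith [hT s])
    (fun s t ht => ?_) ht
  · rintro _ ⟨p, rfl⟩
    have hφp := hB ⟨p, rfl⟩
    have hwp := rpow_pos_of_pos (cosh_pos p.2) (-γ)
    dsimp only
    nlinarith
  · rw [ellipticOp_sub hw hφ, ellipticOp_const_mul M (ψ := fun p => cosh p.2 ^ (-γ)),
      ellipticOp_comp_snd (fun t => cosh t ^ (-γ)), deriv_deriv_cosh_rpow]
    have hpos := rpow_pos_of_pos (cosh_pos t) (-γ - 2)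
    have hw := rpow_pos_of_pos (cosh_pos t) (-γ)
    have hbarrier : (-γ) ^ 2 * cosh t ^ (-γ) - -γ * (-γ - 1) * cosh t ^ (-γ - 2)
        + c t * cosh t ^ (-γ) ≤ -δ * cosh t ^ (-γ) := by
      nlinarith [hc t ht, mul_nonneg (mul_nonneg hγ (by linarith : 0 ≤ γ + 1)) hpos.le]
    nlinarith [hL s t ht, mul_le_mul_of_nonneg_left hbarrier hM]

theorem abs_le_mul_cosh_rpow_of_abs_ellipticOp_le {B : ℝ} (ha : ∀ s, 0 ≤ a s ∧ a s ≤ A)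
    (hγ : 0 ≤ γ) (hδ : 0 < δ) (hc : ∀ t, T < t → c t ≤ -(δ + γ ^ 2))
    (hφ : ContDiff ℝ 2 φ) (hB : ∀ p, |φ p| ≤ B) (hBT : B ≤ M * cosh T ^ (-γ))
    (hL : ∀ s t, T < t → |ellipticOp a c φ s t| ≤ δ * M * cosh t ^ (-γ))
    {s t : ℝ} (ht : T ≤ t) : |φ (s, t)| ≤ M * cosh t ^ (-γ) := by
  have hM : 0 ≤ M :=
    nonneg_of_mul_nonneg_left ((abs_nonneg _).trans ((hB 0).trans hBT))
      (rpow_pos_of_pos (cosh_pos T) _)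
  have hup : φ (s, t) ≤ _ := le_mul_cosh_rpow_of_ellipticOp_ge ha hγ hδ hc hM hφ
    ⟨B, by rintro _ ⟨p, rfl⟩; exact (le_abs_self _).trans (hB p)⟩
    (fun s => (le_abs_self _).trans ((hB _).trans hBT))
    (fun s t ht => (neg_le_of_abs_le (hL s t ht))) ht
  have hdown : -φ (s, t) ≤ _ := le_mul_cosh_rpow_of_ellipticOp_ge ha hγ hδ hc hM hφ.neg
    ⟨B, by rintro _ ⟨p, rfl⟩; exact (neg_le_abs _).trans (hB p)⟩
    (fun s => (neg_le_abs _).trans ((hB _).trans hBT))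
    (fun s t ht => by rw [ellipticOp_neg]; exact neg_le_neg (le_of_abs_le (hL s t ht))) ht
  exact abs_le.mpr ⟨by linarith, hup⟩

theorem abs_le_mul_cosh_rpow_of_even {B : ℝ} (hc_even : ∀ t, c (-t) = c t) (hT : 0 ≤ T)
    (ha : ∀ s, 0 ≤ a s ∧ a s ≤ A) (hγ : 0 ≤ γ) (hδ : 0 < δ)
    (hc : ∀ t, T < t → c t ≤ -(δ + γ ^ 2)) (hφ : ContDiff ℝ 2 φ) (hB : ∀ p, |φ p| ≤ B)
    (hBT : B ≤ M * cosh T ^ (-γ)) (hL : ∀ s t, |ellipticOp a c φ s t| ≤ δ * M * cosh t ^ (-γ))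
    (s t : ℝ) : |φ (s, t)| ≤ M * cosh t ^ (-γ) := by
  rcases le_or_gt T t with ht | ht
  · exact abs_le_mul_cosh_rpow_of_abs_ellipticOp_le ha hγ hδ hc hφ hB hBT
      (fun s t _ => hL s t) ht
  rcases le_or_gt t (-T) with ht' | ht'
  · have hreflect := abs_le_mul_cosh_rpow_of_abs_ellipticOp_le (φ := fun p => φ (p.1, -p.2))
      (s := s) (t := -t) ha hγ hδ hc (hφ.comp (by fun_prop)) (fun p => hB _) hBT
      (fun s t _ => by
        rw [ellipticOp_comp_neg_snd, funext hc_even, ← cosh_neg t]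
        exact hL s (-t)) (by linarith)
    simpa only [neg_neg, cosh_neg] using hreflect
  · have hM : 0 ≤ M :=
      nonneg_of_mul_nonneg_left ((abs_nonneg _).trans ((hB 0).trans hBT))
        (rpow_pos_of_pos (cosh_pos T) _)
    have hwt : cosh T ^ (-γ) ≤ cosh t ^ (-γ) :=
      rpow_le_rpow_of_nonpos (cosh_pos t)
        (cosh_le_cosh.mpr (by rw [abs_of_nonneg hT]; exact abs_le.mpr ⟨by linarith, ht.le⟩))
        (neg_nonpos.mpr hγ)
    calc |φ (s, t)| ≤ B := hB _
      _ ≤ M * cosh T ^ (-γ) := hBT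
      _ ≤ M * cosh t ^ (-γ) := mul_le_mul_of_nonneg_left hwt hM

end Barrier

theorem vStar_neg (t : ℝ) : vStar (-t) = -vStar t := by
  rw [vStar, vStar, neg_div, tanh_neg]

theorem one_sub_three_mul_vStar_sq (t : ℝ) :
    1 - 3 * vStar t ^ 2 = -2 + 3 * (cosh (t / √2) ^ 2)⁻¹ := by
  have hc := (cosh_pos (t / √2)).ne'
  rw [vStar, tanh_eq_sinh_div_cosh]
  field_simp
  linear_combination 3 * cosh_sq (t / √2)

theorem tendsto_one_sub_three_mul_vStar_sq :
    Tendsto (fun t => 1 - 3 * vStar t ^ 2) atTop (𝓝 (-2)) := by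
  have hcosh : Tendsto (fun t => cosh (t / √2)) atTop atTop :=
    tendsto_atTop_mono (fun t => (le_abs_self _).trans (abs_le_cosh _))
      (tendsto_id.atTop_div_const (sqrt_pos.mpr two_pos))
  have h := ((tendsto_inv_atTop_zero.comp ((tendsto_pow_atTop two_ne_zero).comp hcosh)).const_mul
    3).const_add (-2)
  simp only [mul_zero, add_zero] at h
  exact h.congr fun t => (one_sub_three_mul_vStar_sq t).symm

theorem exists_forall_one_sub_three_mul_vStar_sq_le {κ : ℝ} (hκ : -2 < κ) :
    ∃ T ≥ 0, ∀ t, T < t → 1 - 3 * vStar t ^ 2 ≤ κ := by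
  obtain ⟨T, hT⟩ := ((tendsto_one_sub_three_mul_vStar_sq.eventually (eventually_le_nhds hκ)).and
    (eventually_ge_atTop 0)).exists_forall_of_atTop
  exact ⟨T, (hT T le_rfl).2, fun t ht => (hT t ht.le).1⟩

theorem stmt7 (γ : ℝ) (hγ : γ ∈ Set.Ioo 0 (Real.sqrt 2)) :
    ∃ C : ℝ, 0 < C ∧
      ∀ (a : ℝ → ℝ) (a₀ A : ℝ), Continuous a → 0 < a₀ →
        (∀ s : ℝ, a₀ ≤ a s ∧ a s ≤ A) →
      ∀ φ g : ℝ × ℝ → ℝ, ContDiff ℝ 2 φ → Continuous g →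
      ∀ Mφ G : ℝ, (∀ p : ℝ × ℝ, |φ p| ≤ Mφ) →
        (∀ s t : ℝ, |g (s, t)| * Real.cosh t ^ γ ≤ G) →
        (∀ s t : ℝ,
          a s * pdss φ s t + pdtt φ s t + (1 - 3 * (vStar t) ^ 2) * φ (s, t) = g (s, t)) →
        ∀ s t : ℝ, |φ (s, t)| ≤ C * (Mφ + G) * Real.cosh t ^ (-γ) := by
  have hγ₂ : γ ^ 2 < 2 :=
    (sq_lt_sq' (by linarith [hγ.1, sqrt_nonneg 2]) hγ.2).trans_eq (sq_sqrt zero_le_two)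
  obtain ⟨δ, hδ, hδγ⟩ : ∃ δ : ℝ, 0 < δ ∧ δ + γ ^ 2 < 2 :=
    ⟨(2 - γ ^ 2) / 2, by linarith, by linarith⟩
  obtain ⟨T, hT, hc⟩ := exists_forall_one_sub_three_mul_vStar_sq_le (κ := -(δ + γ ^ 2))
    (by linarith)
  set C := max (cosh T ^ γ) δ⁻¹
  have hCT : 1 ≤ C * cosh T ^ (-γ) := by
    have := mul_le_mul_of_nonneg_right (le_max_left (cosh T ^ γ) δ⁻¹)
      (rpow_pos_of_pos (cosh_pos T) (-γ)).le
    rwa [← rpow_add (cosh_pos T), add_neg_cancel, rpow_zero] at this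
  have hCδ : 1 ≤ δ * C := by
    simpa [mul_inv_cancel₀ hδ.ne'] using mul_le_mul_of_nonneg_left (le_max_right _ δ⁻¹) hδ.le
  refine ⟨C, by positivity, ?_⟩
  intro a a₀ A _ ha₀ haA φ g hφ _ Mφ G hMφ hG heq
  have hMφ₀ : 0 ≤ Mφ := (abs_nonneg _).trans (hMφ 0)
  have hG₀ : 0 ≤ G := (mul_nonneg (abs_nonneg _) (rpow_nonneg (cosh_pos 0).le _)).trans (hG 0 0)
  have hBT : Mφ ≤ C * (Mφ + G) * cosh T ^ (-γ) := by nlinarith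
  have hg : ∀ s t, |g (s, t)| ≤ δ * (C * (Mφ + G)) * cosh t ^ (-γ) := by
    intro s t
    have hw := rpow_pos_of_pos (cosh_pos t) γ
    rw [rpow_neg (cosh_pos t).le, ← div_eq_mul_inv, le_div_iff₀ hw]
    nlinarith [hG s t]
  exact abs_le_mul_cosh_rpow_of_even (fun t => by simp [vStar_neg]) hT
    (fun s => ⟨ha₀.le.trans (haA s).1, (haA s).2⟩) hγ.1.le hδ hc hφ hMφ hBT
    (fun s t => (congrArg abs (heq s t)).trans_le (hg s t))
end
end

section
/- Let 0 < β ≤ B and let V : ℝ³ → ℝ be continuous with β ≤ V(x) ≤ B for all x ∈ ℝ³. If φ : ℝ³ → ℝ is a bounded C² function and g : ℝ³ → ℝ is a bounded continuous function such that Δφ(x) − V(x) φ(x) = g(x) for all x ∈ ℝ³, then sup_{ℝ³} |φ| ≤ β^{−1} sup_{ℝ³} |g|. In particular, the only bounded C² solution of Δφ = V φ on ℝ³ is φ ≡ 0. -/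
/-!
For `ε > 0` the penalized function `φ - ε ‖· - x₀‖²` tends to `-∞` at infinity, so it attains a
global maximum at some `z`, where `φ z ≥ φ x₀`. There every second directional derivative of `φ`
is at most that of the penalty, so `Δφ(z) ≤ 6ε`, and the equation gives
`β φ(z) ≤ V(z) φ(z) ≤ sup |g| + 6ε` whenever `φ(z) ≥ 0`. Letting `ε → 0` and applying the same
to `-φ` bounds `|φ|` by `β⁻¹ sup |g|`.
-/

noncomputable section

open Real

/-- The Laplacian of a function on `ℝ³`, as the sum of the second derivatives along the
coordinate directions. -/
def lap (φ : EuclideanSpace ℝ (Fin 3) → ℝ) (x : EuclideanSpace ℝ (Fin 3)) : ℝ :=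
  ∑ i : Fin 3,
    iteratedDeriv 2 (fun r : ℝ => φ (x + r • EuclideanSpace.single i (1 : ℝ))) 0

open Set Filter Topology

local notation "ℝ³" => EuclideanSpace ℝ (Fin 3)

-- No differentiability is assumed: where `deriv f` is not differentiable the left side is `0`.
theorem IsLocalMax.deriv_deriv_nonpos {f : ℝ → ℝ} {a : ℝ} (h : IsLocalMax f a)
    (hc : ContinuousAt f a) : deriv (deriv f) a ≤ 0 := by
  by_contra! hpos
  have hmin := isLocalMin_of_deriv_deriv_pos hpos h.deriv_eq_zero hc
  have hconst : f =ᶠ[𝓝 a] fun _ => f a := (hmin.and h).mono fun x hx => le_antisymm hx.2 hx.1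
  have := hconst.deriv.deriv_eq
  simp only [deriv_const'] at this
  linarith

theorem IsLocalMax.iteratedDeriv_two_le_of_sub {f g : ℝ → ℝ} {a : ℝ} (hf : ContDiff ℝ 2 f)
    (hg : ContDiff ℝ 2 g) (h : IsLocalMax (f - g) a) :
    iteratedDeriv 2 f a ≤ iteratedDeriv 2 g a := by
  have := h.deriv_deriv_nonpos (hf.continuous.sub hg.continuous).continuousAt
  rw [← iteratedDeriv_one, ← iteratedDeriv_succ', iteratedDeriv_sub hf.contDiffAt hg.contDiffAt]
    at this
  linarith

theorem iteratedDeriv_two_norm_add_smul_sq {E : Type*} [NormedAddCommGroup E]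
    [InnerProductSpace ℝ E] (w e : E) (r : ℝ) :
    iteratedDeriv 2 (fun r : ℝ => ‖w + r • e‖ ^ 2) r = 2 * ‖e‖ ^ 2 := by
  -- `r ^ 1` rather than `r`, so that `iteratedDeriv_pow` computes both terms.
  have hpoly : (fun r : ℝ => ‖w + r • e‖ ^ 2)
      = fun r => ‖w‖ ^ 2 + (2 * inner ℝ w e * r ^ 1 + ‖e‖ ^ 2 * r ^ 2) := by
    funext r
    rw [norm_add_sq_real, real_inner_smul_right, norm_smul, mul_pow, Real.norm_eq_abs, sq_abs]
    ring
  rw [hpoly, iteratedDeriv_const_add two_pos, iteratedDeriv_fun_add (by fun_prop) (by fun_prop),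
    iteratedDeriv_const_mul_field, iteratedDeriv_const_mul_field, iteratedDeriv_pow,
    iteratedDeriv_pow]
  norm_num [Nat.descFactorial, mul_comm]

theorem exists_le_and_iteratedDeriv_two_le {E : Type*} [NormedAddCommGroup E]
    [InnerProductSpace ℝ E] [ProperSpace E] {φ : E → ℝ} (hφ : ContDiff ℝ 2 φ)
    (hb : BddAbove (range φ)) (x₀ : E) {ε : ℝ} (hε : 0 < ε) :
    ∃ z, φ x₀ ≤ φ z ∧
      ∀ e : E, iteratedDeriv 2 (fun r : ℝ => φ (z + r • e)) 0 ≤ 2 * ε * ‖e‖ ^ 2 := by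
  obtain ⟨M, hM⟩ := hb
  set ψ : E → ℝ := fun x => φ x - ε * ‖x - x₀‖ ^ 2
  have hψ : Tendsto ψ (cocompact E) atBot := by
    have hq : Tendsto (fun x => ε * ‖x - x₀‖ ^ 2) (cocompact E) atTop := by
      simpa only [dist_eq_norm, Function.comp_def] using
        ((tendsto_pow_atTop two_ne_zero).comp
          (tendsto_dist_right_cocompact_atTop x₀)).const_mul_atTop hε
    refine tendsto_atBot_mono (fun x => ?_)
      (tendsto_atBot_add_const_left _ M (tendsto_neg_atTop_atBot.comp hq))
    simpa [ψ, sub_eq_add_neg] using hM (mem_range_self x)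
  have hψc : Continuous ψ := hφ.continuous.sub (by fun_prop)
  obtain ⟨z, hz⟩ := hψc.exists_forall_ge hψ
  refine ⟨z, ?_, fun e => ?_⟩
  · have := hz x₀
    simp only [ψ, sub_self, norm_zero] at this
    linarith [mul_nonneg hε.le (sq_nonneg ‖z - x₀‖)]
  · have hmax : IsLocalMax
        ((fun r : ℝ => φ (z + r • e)) - fun r => ε * ‖(z - x₀) + r • e‖ ^ 2) 0 :=
      Eventually.of_forall fun r => by simpa [ψ, add_sub_right_comm] using hz (z + r • e)
    have hq : ContDiff ℝ 2 fun r : ℝ => ‖(z - x₀) + r • e‖ ^ 2 :=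
      (contDiff_norm_sq ℝ).comp (by fun_prop)
    have := hmax.iteratedDeriv_two_le_of_sub (by fun_prop) (contDiff_const.mul hq)
    rwa [iteratedDeriv_const_mul_field, iteratedDeriv_two_norm_add_smul_sq, ← mul_assoc,
      mul_comm ε] at this

theorem lap_le_of_forall_iteratedDeriv_two_le {φ : ℝ³ → ℝ} {z : ℝ³} {c : ℝ}
    (h : ∀ e : ℝ³, iteratedDeriv 2 (fun r : ℝ => φ (z + r • e)) 0 ≤ c * ‖e‖ ^ 2) :
    lap φ z ≤ 3 * c := by
  calc lap φ z ≤ ∑ _i : Fin 3, c := Finset.sum_le_sum fun i _ => by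
          simpa using h (EuclideanSpace.single i 1)
    _ = 3 * c := by simp

theorem lap_neg (φ : ℝ³ → ℝ) (x : ℝ³) : lap (-φ) x = -lap φ x := by
  simp [lap, Finset.sum_neg_distrib]

theorem le_inv_mul_of_mul_sub_lap_le {β G : ℝ} {V φ : ℝ³ → ℝ} (hβ : 0 < β) (hG : 0 ≤ G)
    (hV : ∀ x, β ≤ V x) (hφ : ContDiff ℝ 2 φ) (hb : BddAbove (range φ))
    (h : ∀ x, V x * φ x - lap φ x ≤ G) (x : ℝ³) : φ x ≤ β⁻¹ * G := by
  rw [le_inv_mul_iff₀ hβ]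
  refine le_of_forall_pos_le_add fun δ hδ => ?_
  obtain ⟨z, hxz, hz⟩ := exists_le_and_iteratedDeriv_two_le hφ hb x (ε := δ / 6) (by positivity)
  have hlap : lap φ z ≤ δ := by linarith [lap_le_of_forall_iteratedDeriv_two_le hz]
  calc β * φ x ≤ β * φ z := mul_le_mul_of_nonneg_left hxz hβ.le
    _ ≤ G + δ := by
      rcases le_or_gt (φ z) 0 with hneg | hpos
      · linarith [mul_nonpos_of_nonneg_of_nonpos hβ.le hneg]
      · calc β * φ z ≤ V z * φ z := mul_le_mul_of_nonneg_right (hV z) hpos.le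
          _ ≤ G + δ := by linarith [h z]

theorem abs_le_inv_mul_of_lap_sub_mul_eq {β G : ℝ} {V φ g : ℝ³ → ℝ} (hβ : 0 < β)
    (hV : ∀ x, β ≤ V x) (hφ : ContDiff ℝ 2 φ) (hb : ∃ M, ∀ x, |φ x| ≤ M)
    (hg : ∀ x, |g x| ≤ G) (h : ∀ x, lap φ x - V x * φ x = g x) (x : ℝ³) :
    |φ x| ≤ β⁻¹ * G := by
  have hG : 0 ≤ G := (abs_nonneg _).trans (hg x)
  obtain ⟨M, hM⟩ := hb
  have hφb : BddAbove (range φ) := ⟨M, forall_mem_range.2 fun y => (abs_le.1 (hM y)).2⟩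
  have hφb' : BddAbove (range (-φ)) :=
    ⟨M, forall_mem_range.2 fun y => neg_le.1 (abs_le.1 (hM y)).1⟩
  refine abs_le.2 ⟨?_, ?_⟩
  · have := le_inv_mul_of_mul_sub_lap_le (φ := -φ) hβ hG hV hφ.neg hφb' (fun y => by
      simp only [Pi.neg_apply, lap_neg]
      linarith [h y, (abs_le.1 (hg y)).2]) x
    exact neg_le.1 this
  · exact le_inv_mul_of_mul_sub_lap_le hβ hG hV hφ hφb (fun y => by
      linarith [h y, (abs_le.1 (hg y)).1]) x

theorem stmt9_general (β : ℝ) (hβ : 0 < β)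
    (V : EuclideanSpace ℝ (Fin 3) → ℝ)
    (hVl : ∀ x, β ≤ V x) :
    (∀ φ g : EuclideanSpace ℝ (Fin 3) → ℝ, ContDiff ℝ 2 φ →
      (∃ M : ℝ, ∀ x, |φ x| ≤ M) → Continuous g → (∃ M : ℝ, ∀ x, |g x| ≤ M) →
      (∀ x, lap φ x - V x * φ x = g x) →
      ∀ x, |φ x| ≤ β⁻¹ * ⨆ y, |g y|) ∧
    (∀ φ : EuclideanSpace ℝ (Fin 3) → ℝ, ContDiff ℝ 2 φ →
      (∃ M : ℝ, ∀ x, |φ x| ≤ M) →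
      (∀ x, lap φ x = V x * φ x) → ∀ x, φ x = 0) := by
  refine ⟨fun φ g hφ hφb _ ⟨M, hM⟩ heq x => abs_le_inv_mul_of_lap_sub_mul_eq hβ hVl hφ hφb
    (le_ciSup ⟨M, forall_mem_range.2 hM⟩) heq x, fun φ hφ hφb heq x => ?_⟩
  simpa using abs_le_inv_mul_of_lap_sub_mul_eq (g := 0) (G := 0) hβ hVl hφ hφb (fun _ => by simp)
    (fun y => by simp [heq y]) x

theorem stmt9 (β B : ℝ) (hβ : 0 < β) (hβB : β ≤ B)
    (V : EuclideanSpace ℝ (Fin 3) → ℝ) (hV : Continuous V)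
    (hVl : ∀ x, β ≤ V x) (hVu : ∀ x, V x ≤ B) :
    (∀ φ g : EuclideanSpace ℝ (Fin 3) → ℝ, ContDiff ℝ 2 φ →
      (∃ M : ℝ, ∀ x, |φ x| ≤ M) → Continuous g → (∃ M : ℝ, ∀ x, |g x| ≤ M) →
      (∀ x, lap φ x - V x * φ x = g x) →
      ∀ x, |φ x| ≤ β⁻¹ * ⨆ y, |g y|) ∧
    (∀ φ : EuclideanSpace ℝ (Fin 3) → ℝ, ContDiff ℝ 2 φ →
      (∃ M : ℝ, ∀ x, |φ x| ≤ M) →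
      (∀ x, lap φ x = V x * φ x) → ∀ x, φ x = 0) :=
  stmt9_general β hβ V hVl
end
end

section
/- For every τ ∈ (0,1), setting ε := 1 − √(1 − τ²), there exists a unique C² function ρ : ℝ → ℝ satisfying the ODE ρ''(x) − (1/ρ(x))(1 + ρ'(x)²) + (1 + ρ'(x)²)^{3/2} = 0 for all x ∈ ℝ, with ρ(0) = ε and ρ'(0) = 0; moreover this solution is periodic, i.e. there exists T > 0 with ρ(x + T) = ρ(x) for all x, and it satisfies ε ≤ ρ(x) ≤ 2 − ε for all x ∈ ℝ. -/
/-!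
Along a solution, `ρ / √(1 + ρ'²) - ρ² / 2` is constant (Delaunay's first integral); for our
initial data it equals `τ² / 2`. Writing `ρ = 1 + b cos θ` with `b = √(1 - τ²)`, it becomes
`√(1 + ρ'²) = ρ / D` with `D = (ρ² + τ²) / 2 = 1 + b cos θ - (b² / 2) sin² θ` (`denom`), and
then `ρ' = -b sin θ · θ'` forces `θ' = √Q / D` with `Q = 1 + b cos θ - (b² / 4) sin² θ`
(`radicand`). This angular speed is smooth, positive and `2π`-periodic, so the scalar equation
for `θ` has a global solution with `θ 0 = π` (invert `θ ↦ ∫ dθ / θ'`) that gains `2π` in a fixed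
time `T`. Hence `ρ = 1 + b cos θ` is a `T`-periodic solution oscillating between `1 - b` and
`1 + b`. Uniqueness is Cauchy–Lipschitz uniqueness for the first-order system in `(ρ, ρ')`, whose
vector field is `C¹` wherever `ρ ≠ 0`.
-/

noncomputable section

open Real

open Filter Function Set Topology

theorem ODE_solution_unique_univ_of_contDiffAt {E : Type*} [NormedAddCommGroup E]
    [NormedSpace ℝ E] {v : E → E} {f g : ℝ → E} {t₀ : ℝ}
    (hv : ∀ t, ContDiffAt ℝ 1 v (f t)) (hf : ∀ t, HasDerivAt f (v (f t)) t)
    (hg : ∀ t, HasDerivAt g (v (g t)) t) (h₀ : f t₀ = g t₀) : f = g := by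
  have hfc : Continuous f := continuous_iff_continuousAt.2 fun t => (hf t).continuousAt
  have hgc : Continuous g := continuous_iff_continuousAt.2 fun t => (hg t).continuousAt
  have hopen : IsOpen {t | f t = g t} := by
    refine isOpen_iff_mem_nhds.2 fun t ht => ?_
    obtain ⟨K, s, hs, hlip⟩ := (hv t).exists_lipschitzOnWith
    have hgs : s ∈ 𝓝 (g t) := (show f t = g t from ht) ▸ hs
    exact ODE_solution_unique_of_eventually (v := fun _ => v) (s := fun _ => s) (K := K)
      (.of_forall fun _ => hlip)
      ((Eventually.of_forall hf).and (hfc.continuousAt.preimage_mem_nhds hs))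
      ((Eventually.of_forall hg).and (hgc.continuousAt.preimage_mem_nhds hgs)) ht
  have huniv := IsClopen.eq_univ ⟨isClosed_eq hfc hgc, hopen⟩ ⟨t₀, h₀⟩
  exact funext fun t => (huniv ▸ mem_univ t : t ∈ {t | f t = g t})

theorem surjective_of_mul_sub_le_sub {f : ℝ → ℝ} (hf : Continuous f) {c : ℝ} (hc : 0 < c)
    (h : ∀ ⦃x y⦄, x ≤ y → c * (y - x) ≤ f y - f x) : Surjective f := by
  intro p
  set d := |p - f 0| / c
  have hd : c * d = |p - f 0| := mul_div_cancel₀ _ hc.ne'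
  have hd0 : 0 ≤ d := by positivity
  refine mem_range_of_exists_le_of_exists_ge hf ⟨-d, ?_⟩ ⟨d, ?_⟩
  · have := h (neg_nonpos.2 hd0)
    nlinarith [neg_abs_le (p - f 0)]
  · have := h hd0
    nlinarith [le_abs_self (p - f 0)]

def travelTime (Ω : ℝ → ℝ) (y₀ y : ℝ) : ℝ := ∫ s in y₀..y, (Ω s)⁻¹

section travelTime

variable {Ω : ℝ → ℝ} {y₀ : ℝ}

theorem hasDerivAt_travelTime (hΩ : Continuous Ω) (hpos : ∀ y, 0 < Ω y) (y : ℝ) :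
    HasDerivAt (travelTime Ω y₀) (Ω y)⁻¹ y :=
  have hinv : Continuous fun s => (Ω s)⁻¹ := hΩ.inv₀ fun s => (hpos s).ne'
  intervalIntegral.integral_hasDerivAt_right (hinv.intervalIntegrable _ _)
    (hinv.stronglyMeasurableAtFilter _ _) hinv.continuousAt

theorem travelTime_add_period (hΩ : Continuous Ω) (hpos : ∀ y, 0 < Ω y) {P : ℝ}
    (hper : Periodic Ω P) (y : ℝ) :
    travelTime Ω y₀ (y + P) = travelTime Ω y₀ y + travelTime Ω y₀ (y₀ + P) := by
  have hinv : Continuous fun s => (Ω s)⁻¹ := hΩ.inv₀ fun s => (hpos s).ne'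
  have hper' : Periodic (fun s => (Ω s)⁻¹) P := hper.comp Inv.inv
  rw [travelTime, ← intervalIntegral.integral_add_adjacent_intervals
    (hinv.intervalIntegrable y₀ y) (hinv.intervalIntegrable y (y + P)),
    hper'.intervalIntegral_add_eq y y₀, travelTime, travelTime]

theorem mul_sub_le_travelTime_sub (hΩ : Continuous Ω) (hpos : ∀ y, 0 < Ω y) {M : ℝ}
    (hM : ∀ y, Ω y ≤ M) ⦃x y : ℝ⦄ (hxy : x ≤ y) :
    M⁻¹ * (y - x) ≤ travelTime Ω y₀ y - travelTime Ω y₀ x :=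
  mul_sub_le_image_sub_of_le_deriv (fun y => (hasDerivAt_travelTime hΩ hpos y).differentiableAt)
    (fun y => (hasDerivAt_travelTime hΩ hpos y).deriv ▸ inv_anti₀ (hpos y) (hM y)) hxy

end travelTime

theorem exists_hasDerivAt_comp_add_period {Ω : ℝ → ℝ} {P : ℝ} (hΩ : Continuous Ω)
    (hpos : ∀ y, 0 < Ω y) (hper : Periodic Ω P) (hP : 0 < P) (y₀ : ℝ) :
    ∃ θ : ℝ → ℝ, θ 0 = y₀ ∧ (∀ x, HasDerivAt θ (Ω (θ x)) x) ∧
      ∃ T > 0, ∀ x, θ (x + T) = θ x + P := by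
  set G := travelTime Ω y₀
  have hG : ∀ y, HasDerivAt G (Ω y)⁻¹ y := hasDerivAt_travelTime hΩ hpos
  have hGc : Continuous G := continuous_iff_continuousAt.2 fun y => (hG y).continuousAt
  have hmono : StrictMono G :=
    strictMono_of_deriv_pos fun y => (hG y).deriv ▸ inv_pos.2 (hpos y)
  obtain ⟨M, hM⟩ := (hper.isBounded_of_continuous hP.ne' hΩ).bddAbove
  have hM' : ∀ y, Ω y ≤ M := fun y => hM (mem_range_self y)
  have hsurj : Surjective G := surjective_of_mul_sub_le_sub hGc
    (inv_pos.2 ((hpos 0).trans_le (hM' 0))) (mul_sub_le_travelTime_sub hΩ hpos hM')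
  set e := hmono.orderIsoOfSurjective G hsurj
  have hGe : ∀ x, G (e.symm x) = x := e.apply_symm_apply
  have heG : ∀ y, e.symm (G y) = y := e.symm_apply_apply
  refine ⟨e.symm, ?_, fun x => ?_, G (y₀ + P), ?_, fun x => ?_⟩
  · simpa [G, travelTime] using heG y₀
  · simpa using (hG (e.symm x)).of_local_left_inverse e.symm.continuous.continuousAt
      (inv_ne_zero (hpos _).ne') (.of_forall hGe)
  · simpa [G, travelTime] using hmono (lt_add_of_pos_right y₀ hP)
  · have h : G (e.symm x + P) = G (e.symm x) + G (y₀ + P) :=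
      travelTime_add_period hΩ hpos hper _
    rw [hGe] at h
    rw [← h, heG]

theorem contDiff_succ_of_hasDerivAt_comp {n : ℕ} {Ω θ : ℝ → ℝ} (hΩ : ContDiff ℝ n Ω)
    (hθ : ∀ x, HasDerivAt θ (Ω (θ x)) x) : ContDiff ℝ (n + 1) θ := by
  have hdiff : Differentiable ℝ θ := fun x => (hθ x).differentiableAt
  have hderiv : deriv θ = Ω ∘ θ := funext fun x => (hθ x).deriv
  induction n with
  | zero =>
    refine contDiff_succ_iff_deriv.2 ⟨hdiff, by simp, ?_⟩
    rw [hderiv]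
    exact contDiff_zero.2 (hΩ.continuous.comp hdiff.continuous)
  | succ n ih =>
    refine contDiff_succ_iff_deriv.2 ⟨hdiff, by simp, ?_⟩
    rw [hderiv]
    exact hΩ.comp (ih hΩ.of_succ)

def SolvesDelaunayODE (ρ : ℝ → ℝ) : Prop :=
  ∀ x, deriv (deriv ρ) x - (1 / ρ x) * (1 + (deriv ρ x) ^ 2) +
    (1 + (deriv ρ x) ^ 2) ^ ((3 : ℝ) / 2) = 0

def delaunayField (p : ℝ × ℝ) : ℝ × ℝ :=
  (p.2, 1 / p.1 * (1 + p.2 ^ 2) - (1 + p.2 ^ 2) ^ ((3 : ℝ) / 2))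

theorem contDiffAt_delaunayField {p : ℝ × ℝ} (hp : p.1 ≠ 0) :
    ContDiffAt ℝ 1 delaunayField p := by
  have hw : ContDiff ℝ 1 fun q : ℝ × ℝ => 1 + q.2 ^ 2 := by fun_prop
  refine contDiffAt_snd.prodMk (ContDiffAt.sub ?_ ?_)
  · exact (contDiffAt_const.div contDiffAt_fst hp).mul hw.contDiffAt
  · exact hw.contDiffAt.rpow_const_of_ne (by positivity)

theorem SolvesDelaunayODE.hasDerivAt_phase {ρ : ℝ → ℝ} (hρ : ContDiff ℝ 2 ρ)
    (h : SolvesDelaunayODE ρ) (x : ℝ) :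
    HasDerivAt (fun x => (ρ x, deriv ρ x)) (delaunayField (ρ x, deriv ρ x)) x := by
  have hρ' : ContDiff ℝ 1 (deriv ρ) := hρ.deriv'
  have h2 : deriv (deriv ρ) x =
      1 / ρ x * (1 + deriv ρ x ^ 2) - (1 + deriv ρ x ^ 2) ^ ((3 : ℝ) / 2) := by
    linarith [h x]
  have := ((hρ.differentiable (by norm_num) x).hasDerivAt).prodMk
    ((hρ'.differentiable one_ne_zero x).hasDerivAt)
  rwa [h2] at this

theorem SolvesDelaunayODE.unique {ρ₁ ρ₂ : ℝ → ℝ} (hρ₁ : ContDiff ℝ 2 ρ₁) (h₁ : SolvesDelaunayODE ρ₁)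
    (hρ₂ : ContDiff ℝ 2 ρ₂) (h₂ : SolvesDelaunayODE ρ₂) (hne : ∀ x, ρ₁ x ≠ 0)
    (h₀ : ρ₁ 0 = ρ₂ 0) (h₀' : deriv ρ₁ 0 = deriv ρ₂ 0) : ρ₁ = ρ₂ := by
  have := ODE_solution_unique_univ_of_contDiffAt (fun x => contDiffAt_delaunayField (hne x))
    (h₁.hasDerivAt_phase hρ₁) (h₂.hasDerivAt_phase hρ₂) (t₀ := 0) (by rw [h₀, h₀'])
  exact funext fun x => congrArg Prod.fst (congrFun this x)

namespace Delaunay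

def radius (b θ : ℝ) : ℝ := 1 + b * cos θ

def denom (b θ : ℝ) : ℝ := 1 + b * cos θ - b ^ 2 / 2 * sin θ ^ 2

def radicand (b θ : ℝ) : ℝ := 1 + b * cos θ - b ^ 2 / 4 * sin θ ^ 2

def angularSpeed (b θ : ℝ) : ℝ := √(radicand b θ) / denom b θ

def slope (b θ : ℝ) : ℝ := -(b * sin θ) * angularSpeed b θ

variable {b : ℝ}

theorem one_sub_le_denom (hb0 : 0 ≤ b) (hb1 : b ≤ 1) (θ : ℝ) : 1 - b ≤ denom b θ := by
  have hsin : sin θ ^ 2 = (1 - cos θ) * (1 + cos θ) := by nlinarith [sin_sq_add_cos_sq θ]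
  have : 0 ≤ b * (1 + cos θ) * (2 - b * (1 - cos θ)) :=
    mul_nonneg (mul_nonneg hb0 (by linarith [neg_one_le_cos θ]))
      (by nlinarith [cos_le_one θ, neg_one_le_cos θ])
  rw [denom, hsin]
  nlinarith

theorem one_sub_le_radius (hb0 : 0 ≤ b) (θ : ℝ) : 1 - b ≤ radius b θ := by
  rw [radius]
  nlinarith [neg_one_le_cos θ]

theorem radius_le_one_add (hb0 : 0 ≤ b) (θ : ℝ) : radius b θ ≤ 1 + b := by
  rw [radius]
  nlinarith [cos_le_one θ]

theorem radius_pos (hb0 : 0 ≤ b) (hb1 : b < 1) (θ : ℝ) : 0 < radius b θ :=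
  (sub_pos.2 hb1).trans_le (one_sub_le_radius hb0 θ)

theorem denom_pos (hb0 : 0 ≤ b) (hb1 : b < 1) (θ : ℝ) : 0 < denom b θ :=
  (sub_pos.2 hb1).trans_le (one_sub_le_denom hb0 hb1.le θ)

theorem radicand_pos (hb0 : 0 ≤ b) (hb1 : b < 1) (θ : ℝ) : 0 < radicand b θ := by
  have := denom_pos hb0 hb1 θ
  rw [denom] at this
  rw [radicand]
  nlinarith [sq_nonneg (b * sin θ)]

theorem angularSpeed_pos (hb0 : 0 ≤ b) (hb1 : b < 1) (θ : ℝ) : 0 < angularSpeed b θ :=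
  div_pos (sqrt_pos.2 (radicand_pos hb0 hb1 θ)) (denom_pos hb0 hb1 θ)

theorem contDiff_angularSpeed (hb0 : 0 ≤ b) (hb1 : b < 1) {n : WithTop ℕ∞} :
    ContDiff ℝ n (angularSpeed b) := by
  have hQ : ContDiff ℝ n (radicand b) := by unfold radicand; fun_prop
  have hD : ContDiff ℝ n (denom b) := by unfold denom; fun_prop
  exact (hQ.sqrt fun θ => (radicand_pos hb0 hb1 θ).ne').div hD fun θ => (denom_pos hb0 hb1 θ).ne'

theorem periodic_angularSpeed : Periodic (angularSpeed b) (2 * π) := by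
  intro θ
  simp only [angularSpeed, radicand, denom, cos_add_two_pi, sin_add_two_pi]

theorem hasDerivAt_radius (θ : ℝ) : HasDerivAt (radius b) (-(b * sin θ)) θ := by
  have := ((hasDerivAt_cos θ).const_mul b).const_add 1
  rwa [mul_neg] at this

theorem hasDerivAt_denom (θ : ℝ) :
    HasDerivAt (denom b) (-(b * sin θ) * (1 + b * cos θ)) θ := by
  have := (hasDerivAt_radius (b := b) θ).sub (((hasDerivAt_sin θ).pow 2).const_mul (b ^ 2 / 2))
  exact this.congr_deriv (by push_cast; ring)

theorem hasDerivAt_radicand (θ : ℝ) :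
    HasDerivAt (radicand b) (-(b * sin θ) * (1 + b / 2 * cos θ)) θ := by
  have := (hasDerivAt_radius (b := b) θ).sub (((hasDerivAt_sin θ).pow 2).const_mul (b ^ 2 / 4))
  exact this.congr_deriv (by push_cast; ring)

theorem hasDerivAt_slope (hb0 : 0 ≤ b) (hb1 : b < 1) (θ : ℝ) :
    HasDerivAt (slope b)
      ((radius b θ / denom b θ ^ 2 - radius b θ ^ 3 / denom b θ ^ 3) / angularSpeed b θ) θ := by
  have hQ := radicand_pos hb0 hb1 θ
  have hD := denom_pos hb0 hb1 θ
  have hΩ : HasDerivAt (angularSpeed b) _ θ :=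
    ((hasDerivAt_radicand θ).sqrt hQ.ne').div (hasDerivAt_denom θ) hD.ne'
  have hsin : HasDerivAt (fun t => -(b * sin t)) (-(b * cos θ)) θ :=
    ((hasDerivAt_sin θ).const_mul b).neg
  refine (hsin.mul hΩ).congr_deriv ?_
  have hsq : 0 < √(radicand b θ) := sqrt_pos.2 hQ
  have h2 : √(radicand b θ) ^ 2 = radicand b θ := sq_sqrt hQ.le
  rw [angularSpeed]
  field_simp
  rw [h2]
  simp only [radius, denom, radicand]
  ring

theorem one_add_slope_sq (hb0 : 0 ≤ b) (hb1 : b < 1) (θ : ℝ) :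
    1 + slope b θ ^ 2 = (radius b θ / denom b θ) ^ 2 := by
  have hD := denom_pos hb0 hb1 θ
  rw [slope, angularSpeed, mul_pow, div_pow, sq_sqrt (radicand_pos hb0 hb1 θ).le]
  field_simp
  simp only [radius, denom, radicand]
  ring

theorem contDiff_radius_comp (hb0 : 0 ≤ b) (hb1 : b < 1) {θ : ℝ → ℝ}
    (hθ : ∀ x, HasDerivAt θ (angularSpeed b (θ x)) x) : ContDiff ℝ 2 (radius b ∘ θ) :=
  (show ContDiff ℝ 2 (radius b) by unfold radius; fun_prop).comp
    (contDiff_succ_of_hasDerivAt_comp (n := 1) (contDiff_angularSpeed hb0 hb1) hθ)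

theorem deriv_radius_comp {θ : ℝ → ℝ} (hθ : ∀ x, HasDerivAt θ (angularSpeed b (θ x)) x) :
    deriv (radius b ∘ θ) = slope b ∘ θ :=
  funext fun x => ((hasDerivAt_radius (θ x)).comp x (hθ x)).deriv

theorem solvesDelaunayODE_radius_comp (hb0 : 0 ≤ b) (hb1 : b < 1) {θ : ℝ → ℝ}
    (hθ : ∀ x, HasDerivAt θ (angularSpeed b (θ x)) x) : SolvesDelaunayODE (radius b ∘ θ) := by
  have h1 := deriv_radius_comp hθ
  intro x
  have hΩ := angularSpeed_pos hb0 hb1 (θ x)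
  have hR := radius_pos hb0 hb1 (θ x)
  have hD := denom_pos hb0 hb1 (θ x)
  have h2 : deriv (deriv (radius b ∘ θ)) x =
      radius b (θ x) / denom b (θ x) ^ 2 - radius b (θ x) ^ 3 / denom b (θ x) ^ 3 := by
    rw [h1, ((hasDerivAt_slope hb0 hb1 (θ x)).comp x (hθ x)).deriv, div_mul_cancel₀ _ hΩ.ne']
  have h3 : ((radius b (θ x) / denom b (θ x)) ^ 2) ^ ((3 : ℝ) / 2) =
      (radius b (θ x) / denom b (θ x)) ^ 3 := by
    rw [← rpow_natCast, ← rpow_mul (div_pos hR hD).le]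
    norm_num
  rw [h2, h1, comp_apply, comp_apply, one_add_slope_sq hb0 hb1, h3]
  field_simp
  ring

theorem exists_periodic_solution (hb0 : 0 ≤ b) (hb1 : b < 1) :
    ∃ ρ : ℝ → ℝ, ContDiff ℝ 2 ρ ∧ SolvesDelaunayODE ρ ∧ ρ 0 = 1 - b ∧ deriv ρ 0 = 0 ∧
      (∃ T > 0, Periodic ρ T) ∧ ∀ x, 1 - b ≤ ρ x ∧ ρ x ≤ 1 + b := by
  obtain ⟨θ, hθ0, hθ, T, hT, hθT⟩ := exists_hasDerivAt_comp_add_period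
    (contDiff_angularSpeed hb0 hb1 (n := 0)).continuous (angularSpeed_pos hb0 hb1)
    periodic_angularSpeed two_pi_pos π
  refine ⟨radius b ∘ θ, contDiff_radius_comp hb0 hb1 hθ, solvesDelaunayODE_radius_comp hb0 hb1 hθ,
    ?_, ?_, ⟨T, hT, fun x => ?_⟩, fun x => ⟨one_sub_le_radius hb0 _, radius_le_one_add hb0 _⟩⟩
  · rw [comp_apply, hθ0, radius, cos_pi]
    ring
  · rw [deriv_radius_comp hθ, comp_apply, hθ0, slope, sin_pi]
    ring
  · rw [comp_apply, comp_apply, hθT, radius, radius, cos_add_two_pi]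

end Delaunay

theorem stmt11 (τ : ℝ) (hτ : τ ∈ Set.Ioo (0 : ℝ) 1) :
    ∃ ρ : ℝ → ℝ,
      (ContDiff ℝ 2 ρ ∧
        (∀ x : ℝ, deriv (deriv ρ) x - (1 / ρ x) * (1 + (deriv ρ x) ^ 2) +
          (1 + (deriv ρ x) ^ 2) ^ ((3 : ℝ) / 2) = 0) ∧
        ρ 0 = 1 - Real.sqrt (1 - τ ^ 2) ∧ deriv ρ 0 = 0) ∧
      (∀ ρ' : ℝ → ℝ, ContDiff ℝ 2 ρ' →
        (∀ x : ℝ, deriv (deriv ρ') x - (1 / ρ' x) * (1 + (deriv ρ' x) ^ 2) +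
          (1 + (deriv ρ' x) ^ 2) ^ ((3 : ℝ) / 2) = 0) →
        ρ' 0 = 1 - Real.sqrt (1 - τ ^ 2) → deriv ρ' 0 = 0 → ρ' = ρ) ∧
      (∃ T : ℝ, 0 < T ∧ ∀ x : ℝ, ρ (x + T) = ρ x) ∧
      (∀ x : ℝ, 1 - Real.sqrt (1 - τ ^ 2) ≤ ρ x ∧ ρ x ≤ 2 - (1 - Real.sqrt (1 - τ ^ 2))) := by
  set b := √(1 - τ ^ 2)
  have hb1 : b < 1 := (sqrt_lt' one_pos).2 (by nlinarith [hτ.1])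
  obtain ⟨ρ, hρ, hsol, hρ0, hρ'0, hper, hbounds⟩ :=
    Delaunay.exists_periodic_solution (sqrt_nonneg _) hb1
  refine ⟨ρ, ⟨hρ, hsol, hρ0, hρ'0⟩, fun ρ' hρ' hsol' h0 h0' => ?_, hper,
    fun x => ⟨(hbounds x).1, by linarith [(hbounds x).2]⟩⟩
  exact (hsol.unique hρ hρ' hsol' (fun x => ((sub_pos.2 hb1).trans_le (hbounds x).1).ne')
    (by rw [hρ0, h0]) (by rw [hρ'0, h0'])).symm
end
end

section
/- Let H ∈ ℝ and C₀ > 0, and let v₁ : ℝ → ℝ be continuously differentiable with |v₁(t)| + |v₁'(t)| ≤ C₀ e^{−|t|} for all t ∈ ℝ. For ε > 0 set U_ε := v_⋆ + ε v₁ and λ_ε := − (1/ε) · ( ∫_ℝ t · U_ε'(t)² e^{−εHt} dt ) / ( ∫_ℝ U_ε'(t)² e^{−εHt} dt ). Then there exist ε₀ > 0 and Λ > 0, depending only on H and C₀, such that for all ε ∈ (0, ε₀) both integrals are finite, the denominator is positive, and |λ_ε| ≤ Λ. -/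
/-!
Write `U_ε' = w + ε d` with `w = v⋆'`, `d = v₁'`, and `E t = exp (-ε H t)`. Since `w` is even,
`∫ t w(t)² dt = 0`, so the numerator is `∫ t ((w + ε d)² E - w²)`. By
`(w + ε d)² E - w² = w² (E - 1) + ε d (2 w + ε d) E` and `|E - 1| ≤ ε |H| |t| e^{|t|/4}` (for
`ε |H| ≤ 1/4`), this integrand is `O(ε (1 + |t|)² e^{-7|t|/4})`, so the numerator is `O(ε)`. The
denominator stays above `(m / 2)²`, where `m > 0` is the minimum of `w` on `[-1, 1]`, as soon as
`2 ε C₀ ≤ m`. Hence `λ_ε = O(1)`.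
-/

noncomputable section

open Real MeasureTheory

open Set

lemma integrable_exp_neg_abs : Integrable fun t : ℝ => exp (-|t|) := by
  have hneg : IntegrableOn (fun t : ℝ => exp (-|t|)) (Iic 0) :=
    (integrableOn_exp_Iic 0).congr_fun (fun t ht => by rw [abs_of_nonpos ht, neg_neg])
      measurableSet_Iic
  have hpos : IntegrableOn (fun t : ℝ => exp (-|t|)) (Ioi 0) :=
    (integrableOn_exp_neg_Ioi 0).congr_fun (fun t ht => by rw [abs_of_pos ht])
      measurableSet_Ioi
  have h := hneg.union hpos
  rwa [Iic_union_Ioi, integrableOn_univ] at h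

lemma integral_exp_neg_abs : ∫ t : ℝ, exp (-|t|) = 2 := by
  rw [integral_comp_abs (f := fun x => exp (-x)), integral_exp_neg_Ioi_zero, mul_one]

lemma integrable_of_abs_le_mul_exp_neg_abs {f : ℝ → ℝ} (hf : Continuous f) {K : ℝ}
    (h : ∀ t, |f t| ≤ K * exp (-|t|)) : Integrable f :=
  (integrable_exp_neg_abs.const_mul K).mono' hf.aestronglyMeasurable
    (.of_forall fun t => (norm_eq_abs _).trans_le (h t))

lemma abs_integral_le_of_abs_le_mul_exp_neg_abs {f : ℝ → ℝ} {K : ℝ}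
    (h : ∀ t, |f t| ≤ K * exp (-|t|)) : |∫ t, f t| ≤ 2 * K := by
  have := norm_integral_le_of_norm_le (integrable_exp_neg_abs.const_mul K)
    (.of_forall fun t => (norm_eq_abs _).trans_le (h t))
  rwa [integral_const_mul, integral_exp_neg_abs, mul_comm] at this

lemma integral_eq_zero_of_odd {f : ℝ → ℝ} (hf : ∀ t, f (-t) = -f t) : ∫ t, f t = 0 := by
  have h : ∫ t, f t = -∫ t, f t := by
    calc ∫ t, f t = ∫ t, f (-t) := (integral_neg_eq_self f volume).symm
      _ = -∫ t, f t := by simp_rw [hf, integral_neg]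
  linarith

lemma Real.abs_exp_sub_one_le_mul_exp_abs (x : ℝ) : |exp x - 1| ≤ |x| * exp |x| := by
  rcases le_total 0 x with hx | hx
  · have h : (1 - x) * exp x ≤ 1 :=
      calc (1 - x) * exp x ≤ exp (-x) * exp x := by gcongr; linarith [add_one_le_exp (-x)]
        _ = 1 := by rw [← exp_add, neg_add_cancel, exp_zero]
    rw [abs_of_nonneg hx, abs_of_nonneg (sub_nonneg.2 (one_le_exp hx))]
    linarith
  · rw [abs_of_nonpos hx, abs_of_nonpos (sub_nonpos.2 (exp_le_one_iff.2 hx))]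
    nlinarith [add_one_le_exp x, one_le_exp (neg_nonneg.2 hx)]

lemma nonneg_of_abs_le_mul_exp_neg_abs {f : ℝ → ℝ} {K : ℝ} (h : ∀ t, |f t| ≤ K * exp (-|t|)) :
    0 ≤ K := by
  simpa using (abs_nonneg _).trans (h 0)

lemma exp_neg_mul_le_exp_abs_div_four {c : ℝ} (hc : |c| ≤ 1 / 4) (t : ℝ) :
    exp (-(c * t)) ≤ exp (|t| / 4) := by
  rw [exp_le_exp]
  calc -(c * t) ≤ |c| * |t| := by rw [← abs_mul]; exact neg_le_abs _
    _ ≤ |t| / 4 := by nlinarith [abs_nonneg t]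

lemma abs_exp_neg_mul_sub_one_le {c : ℝ} (hc : |c| ≤ 1 / 4) (t : ℝ) :
    |exp (-(c * t)) - 1| ≤ |c| * |t| * exp (|t| / 4) := by
  have h := abs_exp_sub_one_le_mul_exp_abs (-(c * t))
  rw [abs_neg, abs_mul] at h
  exact h.trans (by gcongr; nlinarith [abs_nonneg t])

/-- Dominates all integrands below: `(1 + |t|) ^ 2` absorbs the factor `t`, `exp (-|t|) ^ 2` the
two decaying factors and `exp (|t| / 4)` the weight `exp (-(ε * H * t))` once `|ε * H| ≤ 1 / 4`. -/
def decayWeight (t : ℝ) : ℝ := (1 + |t|) ^ 2 * exp (-|t|) ^ 2 * exp (|t| / 4)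

lemma decayWeight_le (t : ℝ) : decayWeight t ≤ 16 * exp (-|t|) := by
  have hlin : 1 + |t| ≤ 4 * exp (|t| / 4) := by linarith [add_one_le_exp (|t| / 4), abs_nonneg t]
  calc decayWeight t ≤ (4 * exp (|t| / 4)) ^ 2 * exp (-|t|) ^ 2 * exp (|t| / 4) := by
        unfold decayWeight; gcongr
    _ = 16 * (exp (|t| / 4) * exp (|t| / 4) * exp (-|t|) * exp (-|t|) * exp (|t| / 4)) := by
        ring
    _ = 16 * exp (-(|t| / 4) - |t|) := by
        simp only [← exp_add]
        ring_nf
    _ ≤ 16 * exp (-|t|) := by gcongr; linarith [abs_nonneg t]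

lemma abs_mul_mul_mul_exp_le {a u v c t K₁ K₂ : ℝ} (ha : |a| ≤ (1 + |t|) ^ 2)
    (hu : |u| ≤ K₁ * exp (-|t|)) (hv : |v| ≤ K₂ * exp (-|t|)) (hc : |c| ≤ 1 / 4) :
    |a * u * v * exp (-(c * t))| ≤ K₁ * K₂ * decayWeight t := by
  have hK₁ : 0 ≤ K₁ * exp (-|t|) := (abs_nonneg u).trans hu
  have hK₂ : 0 ≤ K₂ * exp (-|t|) := (abs_nonneg v).trans hv
  calc |a * u * v * exp (-(c * t))| = |a| * |u| * |v| * exp (-(c * t)) := by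
        rw [abs_mul, abs_mul, abs_mul, abs_of_pos (exp_pos _)]
    _ ≤ (1 + |t|) ^ 2 * (K₁ * exp (-|t|)) * (K₂ * exp (-|t|)) * exp (|t| / 4) := by
        gcongr ?_ * ?_ * ?_ * ?_
        exact exp_neg_mul_le_exp_abs_div_four hc t
    _ = K₁ * K₂ * decayWeight t := by unfold decayWeight; ring

lemma abs_mul_sq_mul_exp_sub_one_le {u c t A : ℝ} (hu : |u| ≤ A * exp (-|t|))
    (hc : |c| ≤ 1 / 4) : |t * u ^ 2 * (exp (-(c * t)) - 1)| ≤ |c| * A ^ 2 * decayWeight t :=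
  calc |t * u ^ 2 * (exp (-(c * t)) - 1)| = |t| * |u| ^ 2 * |exp (-(c * t)) - 1| := by
        rw [abs_mul, abs_mul, abs_pow]
    _ ≤ |t| * (A * exp (-|t|)) ^ 2 * (|c| * |t| * exp (|t| / 4)) := by
        gcongr ?_ * ?_ ^ 2 * ?_
        exact abs_exp_neg_mul_sub_one_le hc t
    _ = |c| * A ^ 2 * (|t| ^ 2 * exp (-|t|) ^ 2 * exp (|t| / 4)) := by ring
    _ ≤ |c| * A ^ 2 * decayWeight t := by
        unfold decayWeight; gcongr; linarith [abs_nonneg t]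

section Integrability

variable {g : ℝ → ℝ} {K c : ℝ}

lemma abs_mul_sq_mul_exp_le (hgK : ∀ t, |g t| ≤ K * exp (-|t|)) (hc : |c| ≤ 1 / 4) {a t : ℝ}
    (ha : |a| ≤ (1 + |t|) ^ 2) : |a * g t ^ 2 * exp (-(c * t))| ≤ 16 * K ^ 2 * exp (-|t|) := by
  have hK := nonneg_of_abs_le_mul_exp_neg_abs hgK
  calc |a * g t ^ 2 * exp (-(c * t))| = |a * g t * g t * exp (-(c * t))| := by
        rw [sq, ← mul_assoc a]
    _ ≤ K * K * decayWeight t := abs_mul_mul_mul_exp_le ha (hgK t) (hgK t) hc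
    _ ≤ K * K * (16 * exp (-|t|)) := by gcongr; exact decayWeight_le t
    _ = 16 * K ^ 2 * exp (-|t|) := by ring

lemma integrable_sq_mul_exp (hg : Continuous g) (hgK : ∀ t, |g t| ≤ K * exp (-|t|))
    (hc : |c| ≤ 1 / 4) : Integrable fun t => g t ^ 2 * exp (-(c * t)) :=
  integrable_of_abs_le_mul_exp_neg_abs (by fun_prop) fun t => by
    simpa using abs_mul_sq_mul_exp_le hgK hc (a := 1) (t := t)
      (by rw [abs_one]; nlinarith [abs_nonneg t])

lemma integrable_mul_sq_mul_exp (hg : Continuous g) (hgK : ∀ t, |g t| ≤ K * exp (-|t|))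
    (hc : |c| ≤ 1 / 4) : Integrable fun t => t * g t ^ 2 * exp (-(c * t)) :=
  integrable_of_abs_le_mul_exp_neg_abs (by fun_prop) fun t =>
    abs_mul_sq_mul_exp_le hgK hc (by nlinarith [abs_nonneg t])

lemma sq_le_integral_sq_mul_exp {a : ℝ} (ha : 0 ≤ a) (hga : ∀ t ∈ Icc (-1 : ℝ) 1, a ≤ g t)
    (hc : |c| ≤ 1 / 4) (hint : Integrable fun t => g t ^ 2 * exp (-(c * t))) :
    a ^ 2 ≤ ∫ t, g t ^ 2 * exp (-(c * t)) := by
  have hpt : ∀ t ∈ Icc (-1 : ℝ) 1, a ^ 2 / 2 ≤ g t ^ 2 * exp (-(c * t)) := by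
    intro t ht
    have hE : 1 / 2 ≤ exp (-(c * t)) := by
      have hct : |c * t| ≤ 1 / 4 := by
        rw [abs_mul]; nlinarith [abs_le.2 ⟨ht.1, ht.2⟩, abs_nonneg c, abs_nonneg t]
      linarith [add_one_le_exp (-(c * t)), le_abs_self (c * t)]
    have hg : a ^ 2 ≤ g t ^ 2 := pow_le_pow_left₀ ha (hga t ht) 2
    nlinarith
  calc a ^ 2 = a ^ 2 / 2 * volume.real (Icc (-1 : ℝ) 1) := by
        rw [volume_real_Icc_of_le (by norm_num)]; ring
    _ ≤ ∫ t in Icc (-1 : ℝ) 1, g t ^ 2 * exp (-(c * t)) :=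
        setIntegral_ge_of_const_le_real measurableSet_Icc (by simp) hpt hint.integrableOn
    _ ≤ ∫ t, g t ^ 2 * exp (-(c * t)) :=
        setIntegral_le_integral hint (.of_forall fun t => by positivity)

end Integrability

section MomentRatio

variable {w d : ℝ → ℝ} {A C₀ ε H : ℝ}

lemma abs_add_mul_le (hwA : ∀ t, |w t| ≤ A * exp (-|t|)) (hdC : ∀ t, |d t| ≤ C₀ * exp (-|t|))
    (hε0 : 0 ≤ ε) (hε1 : ε ≤ 1) (t : ℝ) : |w t + ε * d t| ≤ (A + C₀) * exp (-|t|) :=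
  calc |w t + ε * d t| ≤ |w t| + ε * |d t| :=
        (abs_add_le _ _).trans_eq (by rw [abs_mul, abs_of_nonneg hε0])
    _ ≤ A * exp (-|t|) + 1 * (C₀ * exp (-|t|)) := by gcongr; exacts [hwA t, hdC t]
    _ = (A + C₀) * exp (-|t|) := by ring

lemma abs_mul_sq_mul_exp_sub_le (hwA : ∀ t, |w t| ≤ A * exp (-|t|))
    (hdC : ∀ t, |d t| ≤ C₀ * exp (-|t|)) (hε0 : 0 ≤ ε) (hε1 : ε ≤ 1) (hεH : |ε * H| ≤ 1 / 4)
    (t : ℝ) :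
    |t * (w t + ε * d t) ^ 2 * exp (-(ε * H * t)) - t * w t ^ 2|
      ≤ 16 * (ε * (A ^ 2 * |H| + C₀ * (2 * A + C₀))) * exp (-|t|) := by
  have hA := nonneg_of_abs_le_mul_exp_neg_abs hwA
  have hC₀ := nonneg_of_abs_le_mul_exp_neg_abs hdC
  have hεd : |ε * d t| ≤ ε * C₀ * exp (-|t|) := by
    rw [abs_mul, abs_of_nonneg hε0, mul_assoc]; gcongr; exact hdC t
  have hsum : |2 * w t + ε * d t| ≤ (2 * A + C₀) * exp (-|t|) :=
    calc |2 * w t + ε * d t| ≤ 2 * |w t| + ε * C₀ * exp (-|t|) :=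
          (abs_add_le _ _).trans (by rw [abs_mul, abs_two]; gcongr)
      _ ≤ 2 * (A * exp (-|t|)) + 1 * C₀ * exp (-|t|) := by gcongr; exact hwA t
      _ = (2 * A + C₀) * exp (-|t|) := by ring
  have hflat := abs_mul_sq_mul_exp_sub_one_le (hwA t) hεH
  rw [abs_mul ε H, abs_of_nonneg hε0] at hflat
  have hcorr := abs_mul_mul_mul_exp_le (a := t) (by nlinarith [abs_nonneg t]) hεd hsum hεH
  set E := exp (-(ε * H * t))
  calc |t * (w t + ε * d t) ^ 2 * E - t * w t ^ 2|
      = |t * w t ^ 2 * (E - 1) + t * (ε * d t) * (2 * w t + ε * d t) * E| := by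
        congr 1; ring
    _ ≤ ε * |H| * A ^ 2 * decayWeight t + ε * C₀ * (2 * A + C₀) * decayWeight t :=
        (abs_add_le _ _).trans (add_le_add hflat hcorr)
    _ = ε * (A ^ 2 * |H| + C₀ * (2 * A + C₀)) * decayWeight t := by ring
    _ ≤ ε * (A ^ 2 * |H| + C₀ * (2 * A + C₀)) * (16 * exp (-|t|)) := by
        gcongr; exact decayWeight_le t
    _ = 16 * (ε * (A ^ 2 * |H| + C₀ * (2 * A + C₀))) * exp (-|t|) := by ring

lemma abs_integral_mul_sq_mul_exp_le (hw : Continuous w) (hd : Continuous d)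
    (hw_even : ∀ t, w (-t) = w t) (hwA : ∀ t, |w t| ≤ A * exp (-|t|))
    (hdC : ∀ t, |d t| ≤ C₀ * exp (-|t|)) (hε0 : 0 ≤ ε) (hε1 : ε ≤ 1) (hεH : |ε * H| ≤ 1 / 4) :
    |∫ t, t * (w t + ε * d t) ^ 2 * exp (-(ε * H * t))|
      ≤ 32 * (ε * (A ^ 2 * |H| + C₀ * (2 * A + C₀))) := by
  have hodd : ∫ t, t * w t ^ 2 = 0 := integral_eq_zero_of_odd fun t => by rw [hw_even]; ring
  have hflat : Integrable fun t => t * w t ^ 2 := by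
    simpa using integrable_mul_sq_mul_exp hw hwA (c := 0) (by norm_num)
  have hnum := integrable_mul_sq_mul_exp (by fun_prop) (abs_add_mul_le hwA hdC hε0 hε1) hεH
  rw [← sub_zero (∫ t, _), ← hodd, ← integral_sub hnum hflat]
  linarith [abs_integral_le_of_abs_le_mul_exp_neg_abs
    (abs_mul_sq_mul_exp_sub_le hwA hdC hε0 hε1 hεH)]

theorem abs_moment_ratio_le_of_small (hw : Continuous w) (hd : Continuous d) (hw_even : ∀ t, w (-t) = w t)
    (hwA : ∀ t, |w t| ≤ A * exp (-|t|)) (hdC : ∀ t, |d t| ≤ C₀ * exp (-|t|)) {m : ℝ}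
    (hm : 0 < m) (hwm : ∀ t ∈ Icc (-1 : ℝ) 1, m ≤ w t) (hε0 : 0 < ε) (hε1 : ε ≤ 1)
    (hεH : |ε * H| ≤ 1 / 4) (hεC : 2 * ε * C₀ ≤ m) :
    Integrable (fun t => (w t + ε * d t) ^ 2 * exp (-(ε * H * t))) ∧
    Integrable (fun t => t * (w t + ε * d t) ^ 2 * exp (-(ε * H * t))) ∧
    (0 < ∫ t, (w t + ε * d t) ^ 2 * exp (-(ε * H * t))) ∧
    |(-(1 / ε)) * ((∫ t, t * (w t + ε * d t) ^ 2 * exp (-(ε * H * t))) /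
        (∫ t, (w t + ε * d t) ^ 2 * exp (-(ε * H * t))))|
      ≤ 128 * (A ^ 2 * |H| + C₀ * (2 * A + C₀)) / m ^ 2 := by
  have hg : Continuous fun t => w t + ε * d t := by fun_prop
  have hgK := abs_add_mul_le hwA hdC hε0.le hε1
  have hgm : ∀ t ∈ Icc (-1 : ℝ) 1, m / 2 ≤ w t + ε * d t := by
    intro t ht
    have hdt : |d t| ≤ C₀ := (hdC t).trans
      (mul_le_of_le_one_right (nonneg_of_abs_le_mul_exp_neg_abs hdC) (by simp))
    nlinarith [hwm t ht, neg_abs_le (d t)]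
  have hden := integrable_sq_mul_exp hg hgK hεH
  have hN := abs_integral_mul_sq_mul_exp_le hw hd hw_even hwA hdC hε0.le hε1 hεH
  have hD := sq_le_integral_sq_mul_exp (by positivity) hgm hεH hden
  set N := ∫ t, t * (w t + ε * d t) ^ 2 * exp (-(ε * H * t))
  set D := ∫ t, (w t + ε * d t) ^ 2 * exp (-(ε * H * t))
  have hDpos : 0 < D := lt_of_lt_of_le (by positivity) hD
  refine ⟨hden, integrable_mul_sq_mul_exp hg hgK hεH, hDpos, ?_⟩
  rw [abs_mul, abs_neg, abs_of_pos (one_div_pos.2 hε0), abs_div, abs_of_pos hDpos]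
  calc 1 / ε * (|N| / D)
      ≤ 1 / ε * (32 * (ε * (A ^ 2 * |H| + C₀ * (2 * A + C₀))) / (m / 2) ^ 2) := by
        have := (abs_nonneg N).trans hN
        gcongr
    _ = 128 * (A ^ 2 * |H| + C₀ * (2 * A + C₀)) / m ^ 2 := by field_simp; ring

end MomentRatio

theorem exists_abs_moment_ratio_le {w : ℝ → ℝ} (hw : Continuous w) (hw_pos : ∀ t, 0 < w t)
    (hw_even : ∀ t, w (-t) = w t) {A : ℝ} (hwA : ∀ t, |w t| ≤ A * exp (-|t|)) (H : ℝ) {C₀ : ℝ}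
    (hC₀ : 0 ≤ C₀) :
    ∃ ε₀ : ℝ, 0 < ε₀ ∧ ∃ Λ : ℝ, 0 < Λ ∧
      ∀ d : ℝ → ℝ, Continuous d → (∀ t, |d t| ≤ C₀ * exp (-|t|)) →
        ∀ ε ∈ Ioo 0 ε₀,
          Integrable (fun t => (w t + ε * d t) ^ 2 * exp (-(ε * H * t))) ∧
          Integrable (fun t => t * (w t + ε * d t) ^ 2 * exp (-(ε * H * t))) ∧
          (0 < ∫ t, (w t + ε * d t) ^ 2 * exp (-(ε * H * t))) ∧
          |(-(1 / ε)) * ((∫ t, t * (w t + ε * d t) ^ 2 * exp (-(ε * H * t))) /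
              (∫ t, (w t + ε * d t) ^ 2 * exp (-(ε * H * t))))| ≤ Λ := by
  obtain ⟨t₀, -, ht₀⟩ := isCompact_Icc.exists_isMinOn
    (nonempty_Icc.2 (by norm_num : (-1 : ℝ) ≤ 1)) hw.continuousOn
  have hm := hw_pos t₀
  have hA := nonneg_of_abs_le_mul_exp_neg_abs hwA
  refine ⟨min 1 (min (1 / (4 * |H| + 1)) (w t₀ / (2 * C₀ + 1))), by positivity,
    128 * (A ^ 2 * |H| + C₀ * (2 * A + C₀)) / w t₀ ^ 2 + 1, by positivity, ?_⟩
  rintro d hd hdC ε ⟨hε0, hε⟩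
  simp only [lt_min_iff] at hε
  obtain ⟨hε1, hεH, hεC⟩ := hε
  rw [lt_div_iff₀ (by positivity)] at hεH hεC
  obtain ⟨hden, hnum, hpos, hbound⟩ := abs_moment_ratio_le_of_small (H := H) hw hd hw_even hwA hdC hm
    (fun t ht => ht₀ ht) hε0 hε1.le
    (by rw [abs_mul, abs_of_pos hε0]; nlinarith [abs_nonneg H]) (by nlinarith)
  exact ⟨hden, hnum, hpos, hbound.trans (le_add_of_nonneg_right zero_le_one)⟩

lemma Real.hasDerivAt_tanh_s12 (x : ℝ) : HasDerivAt tanh (cosh x ^ 2)⁻¹ x := by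
  have h := (hasDerivAt_sinh x).div (hasDerivAt_cosh x) (cosh_pos x).ne'
  rw [← sq, ← sq, cosh_sq_sub_sinh_sq, one_div] at h
  exact h.congr_of_eventuallyEq (.of_forall tanh_eq_sinh_div_cosh)

lemma Real.exp_abs_div_two_le_cosh (x : ℝ) : exp |x| / 2 ≤ cosh x := by
  rw [← cosh_abs, cosh_eq]
  linarith [exp_pos (-|x|)]

lemma Real.inv_cosh_sq_le (x : ℝ) : (cosh x ^ 2)⁻¹ ≤ 4 * exp (-(2 * |x|)) := by
  have h : 4 * exp (-(2 * |x|)) = ((exp |x| / 2) ^ 2)⁻¹ := by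
    rw [div_pow, inv_div, ← exp_nat_mul, exp_neg]
    push_cast
    ring
  rw [h]
  exact inv_anti₀ (by positivity) (pow_le_pow_left₀ (by positivity) (exp_abs_div_two_le_cosh x) 2)

def vStarDeriv (t : ℝ) : ℝ := (√2)⁻¹ * (cosh (t / √2) ^ 2)⁻¹

lemma hasDerivAt_vStar_s12 (t : ℝ) : HasDerivAt vStar (vStarDeriv t) t :=
  ((hasDerivAt_tanh_s12 (t / √2)).comp t ((hasDerivAt_id t).div_const √2)).congr_deriv
    (by rw [vStarDeriv]; ring)

lemma continuous_vStarDeriv : Continuous vStarDeriv := by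
  unfold vStarDeriv
  exact continuous_const.mul ((continuous_cosh.comp (continuous_id.div_const _)).pow 2 |>.inv₀
    fun t => (pow_pos (cosh_pos _) 2).ne')

lemma vStarDeriv_pos (t : ℝ) : 0 < vStarDeriv t := by
  unfold vStarDeriv; positivity

lemma vStarDeriv_neg (t : ℝ) : vStarDeriv (-t) = vStarDeriv t := by
  simp only [vStarDeriv, neg_div, cosh_neg]

lemma abs_vStarDeriv_le (t : ℝ) : |vStarDeriv t| ≤ 4 * exp (-|t|) := by
  have hs : 1 ≤ √2 := one_le_sqrt.2 one_le_two
  have hexp : exp (-(2 * |t / √2|)) ≤ exp (-|t|) := by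
    rw [exp_le_exp, abs_div, abs_of_pos (by positivity : (0 : ℝ) < √2), neg_le_neg_iff,
      mul_div_assoc', le_div_iff₀ (by positivity)]
    nlinarith [abs_nonneg t, sq_sqrt (zero_le_two : (0 : ℝ) ≤ 2)]
  rw [abs_of_pos (vStarDeriv_pos t), vStarDeriv]
  calc (√2)⁻¹ * (cosh (t / √2) ^ 2)⁻¹ ≤ 1 * (4 * exp (-(2 * |t / √2|))) := by
        gcongr
        · exact inv_le_one_of_one_le₀ hs
        · exact inv_cosh_sq_le _
    _ ≤ 4 * exp (-|t|) := by linarith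

theorem stmt12 (H C₀ : ℝ) (hC₀ : 0 < C₀) :
    ∃ ε₀ : ℝ, 0 < ε₀ ∧ ∃ Λ : ℝ, 0 < Λ ∧
      ∀ v₁ : ℝ → ℝ, ContDiff ℝ 1 v₁ →
        (∀ t : ℝ, |v₁ t| + |deriv v₁ t| ≤ C₀ * Real.exp (-|t|)) →
        ∀ ε : ℝ, ε ∈ Set.Ioo 0 ε₀ →
          Integrable
            (fun t : ℝ => (deriv (fun x => vStar x + ε * v₁ x) t) ^ 2 *
              Real.exp (-(ε * H * t))) ∧
          Integrable
            (fun t : ℝ => t * (deriv (fun x => vStar x + ε * v₁ x) t) ^ 2 *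
              Real.exp (-(ε * H * t))) ∧
          (0 < ∫ t : ℝ, (deriv (fun x => vStar x + ε * v₁ x) t) ^ 2 *
              Real.exp (-(ε * H * t))) ∧
          |(-(1 / ε)) *
              ((∫ t : ℝ, t * (deriv (fun x => vStar x + ε * v₁ x) t) ^ 2 *
                  Real.exp (-(ε * H * t))) /
                (∫ t : ℝ, (deriv (fun x => vStar x + ε * v₁ x) t) ^ 2 *
                  Real.exp (-(ε * H * t))))| ≤ Λ := by
  obtain ⟨ε₀, hε₀, Λ, hΛ, hbound⟩ := exists_abs_moment_ratio_le continuous_vStarDeriv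
    vStarDeriv_pos vStarDeriv_neg abs_vStarDeriv_le H hC₀.le
  refine ⟨ε₀, hε₀, Λ, hΛ, fun v₁ hv₁ hv₁C ε hε => ?_⟩
  have hderiv : deriv (fun x => vStar x + ε * v₁ x) = fun t => vStarDeriv t + ε * deriv v₁ t :=
    funext fun t =>
      ((hasDerivAt_vStar_s12 t).add ((hv₁.differentiable one_ne_zero t).hasDerivAt.const_mul ε)).deriv
  simp only [hderiv]
  exact hbound (deriv v₁) (hv₁.continuous_deriv le_rfl)
    (fun t => (le_add_of_nonneg_left (abs_nonneg _)).trans (hv₁C t)) ε hε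
end
end

section
/- Let ν ∈ (0, √2) and A ≥ 0, and let ψ : [0, ∞) → ℝ be bounded, twice continuously differentiable, and satisfy −ψ''(s) + 2ψ(s) ≤ A e^{−νs} for all s > 0. Then ψ(s) ≤ ( A/(2 − ν²) + max(ψ(0), 0) ) e^{−νs} for all s ≥ 0. -/
/-!
With `λ = A / (2 - ν²) + max (ψ 0) 0` we have `λ (2 - ν²) ≥ A`, so `φ = ψ - λ e^{-νs}` satisfies
`φ'' ≥ 2φ` on `(0, ∞)`, `φ 0 ≤ 0`, and `φ` is bounded above. Such a `φ` is nonpositive: after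
subtracting a small linear function `ε s`, which leaves `φ''` unchanged and drives `φ` to `-∞`,
a positive value of `φ` would produce an interior maximum at which `φ > 0`, hence `φ'' > 0`,
contradicting the second derivative test.
-/

noncomputable section

open Real Set Filter Topology

theorem iteratedDeriv_two_eq_deriv_deriv {𝕜 F : Type*} [NontriviallyNormedField 𝕜]
    [NormedAddCommGroup F] [NormedSpace 𝕜 F] (f : 𝕜 → F) :
    iteratedDeriv 2 f = deriv (deriv f) := by
  rw [iteratedDeriv_succ, iteratedDeriv_one]

theorem not_isLocalMax_of_deriv_deriv_pos {f : ℝ → ℝ} {x : ℝ} (hf : 0 < deriv (deriv f) x)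
    (hc : ContinuousAt f x) : ¬IsLocalMax f x := by
  intro hmax
  have hmin : IsLocalMin f x := isLocalMin_of_deriv_deriv_pos hf hmax.deriv_eq_zero hc
  have hconst : f =ᶠ[𝓝 x] fun _ => f x := by
    filter_upwards [hmax, hmin] with y hy₁ hy₂ using le_antisymm hy₁ hy₂
  have : deriv (deriv f) x = 0 := by
    rw [hconst.deriv.deriv_eq]
    simp
  exact hf.ne' this

theorem deriv_deriv_sub_const_mul_exp {ψ : ℝ → ℝ} {s : ℝ} (hψ : ContDiffAt ℝ 2 ψ s) (l ν : ℝ) :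
    deriv (deriv fun t => ψ t - l * exp (-ν * t)) s
      = deriv (deriv ψ) s - l * ν ^ 2 * exp (-ν * s) := by
  rw [← iteratedDeriv_two_eq_deriv_deriv, iteratedDeriv_fun_sub hψ (by fun_prop),
    iteratedDeriv_const_mul_field, iteratedDeriv_exp_const_mul, iteratedDeriv_two_eq_deriv_deriv]
  ring

theorem nonpos_of_bddAbove_of_deriv_deriv_pos {φ : ℝ → ℝ} {a : ℝ} (hφ : ContDiffOn ℝ 2 φ (Ici a))
    (hbdd : BddAbove (φ '' Ici a)) (ha : φ a ≤ 0)
    (hpos : ∀ t > a, 0 < φ t → 0 < deriv (deriv φ) t) {s : ℝ} (hs : a ≤ s) : φ s ≤ 0 := by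
  by_contra! hφs
  obtain ⟨M, hM⟩ := hbdd
  rw [mem_upperBounds, forall_mem_image] at hM
  have has : a < s := hs.lt_of_ne (by rintro rfl; linarith)
  -- `ε` is chosen so that the tilted function `w` is still positive at `s`.
  set ε := φ s / (2 * (s - a))
  have hε : 0 < ε := div_pos hφs (by linarith)
  set w : ℝ → ℝ := fun t => φ t - ε * (t - a)
  set R := max s (a + M / ε)
  have hsR : s ≤ R := le_max_left _ _
  have hw : ContinuousOn w (Icc a R) :=
    (hφ.continuousOn.mono Icc_subset_Ici_self).sub (by fun_prop)
  obtain ⟨c, hc, hcmax⟩ := isCompact_Icc.exists_isMaxOn (nonempty_Icc.2 (hs.trans hsR)) hw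
  have hws : w s = φ s / 2 := by
    have hsa : s - a ≠ 0 := (sub_pos.2 has).ne'
    simp only [w, ε]
    field_simp
    ring
  have hwc : 0 < w c := (by linarith : 0 < w s).trans_le (hcmax ⟨hs, hsR⟩)
  have hac : a < c := hc.1.lt_of_ne (by rintro rfl; simp [w] at hwc; linarith)
  have hcR : c < R := by
    refine hc.2.lt_of_ne ?_
    rintro rfl
    have hMR : φ R ≤ M := hM (hs.trans hsR)
    have : M ≤ ε * (R - a) := by
      rw [← mul_div_cancel₀ M hε.ne']
      exact mul_le_mul_of_nonneg_left (by linarith [le_max_right s (a + M / ε)]) hε.le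
    simp only [w] at hwc
    linarith
  have hφc : 0 < φ c := by
    have := mul_nonneg hε.le (sub_nonneg.2 hc.1)
    simp only [w] at hwc
    linarith
  have hφc2 : ContDiffAt ℝ 2 φ c := hφ.contDiffAt (Ici_mem_nhds hac)
  have hw'' : deriv (deriv w) c = deriv (deriv φ) c := by
    rw [← iteratedDeriv_two_eq_deriv_deriv, iteratedDeriv_fun_sub hφc2 (by fun_prop),
      iteratedDeriv_two_eq_deriv_deriv]
    simp [iteratedDeriv_two_eq_deriv_deriv]
  exact not_isLocalMax_of_deriv_deriv_pos (hw'' ▸ hpos c hac hφc)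
    (hφc2.continuousAt.sub (by fun_prop)) (hcmax.isLocalMax (Icc_mem_nhds hac hcR))

theorem stmt14 (ν A : ℝ) (hν : ν ∈ Set.Ioo 0 (Real.sqrt 2)) (hA : 0 ≤ A)
    (ψ : ℝ → ℝ) (hψ : ContDiffOn ℝ 2 ψ (Set.Ici 0))
    (hbd : ∃ M : ℝ, ∀ s ∈ Set.Ici (0 : ℝ), |ψ s| ≤ M)
    (hineq : ∀ s : ℝ, 0 < s →
      -(deriv (deriv ψ) s) + 2 * ψ s ≤ A * Real.exp (-ν * s)) :
    ∀ s : ℝ, 0 ≤ s → ψ s ≤ (A / (2 - ν ^ 2) + max (ψ 0) 0) * Real.exp (-ν * s) := by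
  have hν2 : 0 < 2 - ν ^ 2 := sub_pos.2 ((Real.lt_sqrt hν.1.le).1 hν.2)
  set l := A / (2 - ν ^ 2) + max (ψ 0) 0
  have hl : 0 ≤ l := by positivity
  have hgap : A ≤ l * (2 - ν ^ 2) := by
    rw [add_mul, div_mul_cancel₀ A hν2.ne']
    nlinarith [le_max_right (ψ 0) 0]
  intro s hs
  suffices ψ s - l * exp (-ν * s) ≤ 0 by linarith
  refine nonpos_of_bddAbove_of_deriv_deriv_pos (φ := fun t => ψ t - l * exp (-ν * t))
    (hψ.sub (by fun_prop)) ?_ ?_ (fun t ht hφt => ?_) hs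
  · obtain ⟨M, hM⟩ := hbd
    refine ⟨M, forall_mem_image.2 fun t ht => ?_⟩
    have hψt := (le_abs_self _).trans (hM t ht)
    have hbarrier := mul_nonneg hl (exp_pos (-ν * t)).le
    linarith
  · simp only [mul_zero, exp_zero, mul_one, sub_nonpos]
    exact (le_max_left _ _).trans (le_add_of_nonneg_left (by positivity))
  · rw [deriv_deriv_sub_const_mul_exp (hψ.contDiffAt (Ici_mem_nhds ht))]
    have hψt := hineq t ht
    have hgapt := mul_nonneg (sub_nonneg.2 hgap) (exp_pos (-ν * t)).le
    linarith
end
end
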